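/- arXiv:2112.02334 — 6 statements merged into one kernel-verified Lean document; each statement's English description precedes it below -/
import Mathlib

section
/- Let X ⊆ A^Γ be a subshift over a countable group Γ. Then X satisfies the topological Markov property if and only if the étale asymptotic relation equals the asymptotic relation, T⁰(X) = T(X). Consequently, if X satisfies the TMP and f : X → ℝ is such that the series defining Ψ_f(x,y) is absolutely convergent for every (x,y) ∈ T(X), then a Borel probability measure on X is Gibbs with respect to f if and only if it is étale Gibbs with respect to f. -/
open MeasureTheory Filter Topology Pointwise
open scoped ENNReal NNReal

section Core

variable {Γ : Type} [Group Γ]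

/-- The left shift action of `Γ` on configurations `Γ → A`. -/
def shiftAct {A : Type} (g : Γ) (x : Γ → A) : Γ → A := fun h => x (g⁻¹ * h)

/-- A subshift: a closed, shift-invariant set of configurations. -/
def IsSubshift {A : Type} [TopologicalSpace A] (X : Set (Γ → A)) : Prop :=
  IsClosed X ∧ ∀ g : Γ, ∀ x ∈ X, shiftAct g x ∈ X

variable [DecidableEq Γ]

/-- Overwrite the configuration `z` with the pattern `p` on the finite set `F`. -/
def overwrite {A : Type} (F : Finset Γ) (p z : Γ → A) : Γ → A :=
  fun h => if h ∈ F then p h else z h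

/-- Two patterns (represented by configurations, looked at on `F`) are interchangeable in `X`. -/
def Interchangeable {A : Type} (X : Set (Γ → A)) (F : Finset Γ) (p q : Γ → A) : Prop :=
  ∀ z : Γ → A, overwrite F p z ∈ X ↔ overwrite F q z ∈ X

/-- The pairs of configurations of `X` that agree off the finite set `F`. -/
def asympRelF {A : Type} (X : Set (Γ → A)) (F : Finset Γ) : Set ((Γ → A) × (Γ → A)) :=
  {xy | xy.1 ∈ X ∧ xy.2 ∈ X ∧ ∀ g : Γ, g ∉ F → xy.1 g = xy.2 g}

/-- The asymptotic relation `T(X)`. -/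
def asympRel {A : Type} (X : Set (Γ → A)) : Set ((Γ → A) × (Γ → A)) :=
  ⋃ F : Finset Γ, asympRelF X F

/-- The pairs of the étale asymptotic relation supported on `F`. -/
def etaleRelF {A : Type} (X : Set (Γ → A)) (F : Finset Γ) : Set ((Γ → A) × (Γ → A)) :=
  {xy | xy ∈ asympRelF X F ∧ Interchangeable X F xy.1 xy.2}

/-- The étale asymptotic relation `T⁰(X)`. -/
def etaleRel {A : Type} (X : Set (Γ → A)) : Set ((Γ → A) × (Γ → A)) :=
  ⋃ F : Finset Γ, etaleRelF X F

/-- The topological Markov property. -/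
def HasTMP {A : Type} (X : Set (Γ → A)) : Prop :=
  ∀ A₀ : Finset Γ, ∃ B : Finset Γ, A₀ ⊆ B ∧
    ∀ x ∈ X, ∀ y ∈ X, (∀ g ∈ B \ A₀, x g = y g) →
      (fun g => if g ∈ B then x g else y g) ∈ X

/-- The cocycle `Ψ_f(x,y) = Σ_g (f(gy) - f(gx))` induced by a potential `f`. -/
noncomputable def cocycle {A : Type} (f : (Γ → A) → ℝ) (x y : Γ → A) : ℝ :=
  ∑' g : Γ, (f (shiftAct g y) - f (shiftAct g x))

/-- `f` is `F`-locally constant. -/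
def LocallyConstantWrt {A : Type} (F : Finset Γ) (f : (Γ → A) → ℝ) : Prop :=
  ∀ x y : Γ → A, (∀ g ∈ F, x g = y g) → f x = f y

end Core

section GibbsCore

/-- The saturation of a set `N` under a relation `R`. -/
def relSatur {α : Type} (R : Set (α × α)) (N : Set α) : Set α := {y | ∃ x ∈ N, (x, y) ∈ R}

/-- A measure is non-singular with respect to a relation `R` if saturations of null sets
are null. -/
def NonsingularWrt {α : Type} [MeasurableSpace α] (μ : Measure α) (R : Set (α × α)) : Prop :=
  ∀ N : Set α, MeasurableSet N → μ N = 0 → μ (relSatur R N) = 0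

/-- `μ` is a Gibbs measure with respect to the relation `R` and the cocycle `Ψ`:
`μ` is `R`-non-singular and its Radon–Nikodym cocycle is `exp Ψ`, i.e. for every Borel
bijection `φ` whose graph lies a.e. in `R`, `d(μ∘φ)/dμ (x) = exp (Ψ (x, φ x))` a.e. -/
def IsGibbsWrt {α : Type} [MeasurableSpace α] (R : Set (α × α)) (Ψ : α → α → ℝ)
    (μ : Measure α) : Prop :=
  NonsingularWrt μ R ∧
  ∀ φ : α ≃ᵐ α, (∀ᵐ x ∂μ, (x, φ x) ∈ R) →
    ∀ᵐ x ∂μ, (Measure.map φ.symm μ).rnDeriv μ x = ENNReal.ofReal (Real.exp (Ψ x (φ x)))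

end GibbsCore

section Sofic

/-- A sofic approximation sequence for `Γ`. -/
structure SoficApprox (Γ : Type) [Group Γ] where
  n : ℕ → ℕ
  n_pos : ∀ i, 0 < n i
  σ : ∀ i, Γ → Equiv.Perm (Fin (n i))
  card_tendsto : Filter.Tendsto n Filter.atTop Filter.atTop
  almost_action : ∀ s t : Γ,
    Filter.Tendsto (fun i =>
      ((Finset.univ.filter fun v : Fin (n i) => σ i (s * t) v = σ i s (σ i t v)).card : ℝ)
        / (n i : ℝ)) Filter.atTop (nhds 1)
  almost_free : ∀ s t : Γ, s ≠ t →
    Filter.Tendsto (fun i =>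
      ((Finset.univ.filter fun v : Fin (n i) => σ i s v ≠ σ i t v).card : ℝ)
        / (n i : ℝ)) Filter.atTop (nhds 1)

variable {Γ : Type} [Group Γ]

/-- The pullback name of `w : V → A` via `σ` at `v`. -/
def pullbackName {A V : Type} (σ : Γ → Equiv.Perm V) (v : V) (w : V → A) : Γ → A :=
  fun g => w (σ g⁻¹ v)

/-- The empirical distribution of `w : V → A`, as a measure. -/
noncomputable def empMeasure {A V : Type} [MeasurableSpace A] [Fintype V]
    (σ : Γ → Equiv.Perm V) (w : V → A) : Measure (Γ → A) :=
  (Fintype.card V : ℝ≥0∞)⁻¹ • ∑ v : V, Measure.dirac (pullbackName σ v w)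

theorem empMeasure_univ {A V : Type} [MeasurableSpace A] [Fintype V] [Nonempty V]
    (σ : Γ → Equiv.Perm V) (w : V → A) : empMeasure σ w Set.univ = 1 := by
  have h1 : (∑ v : V, Measure.dirac (pullbackName σ v w)) Set.univ
      = ∑ v : V, Measure.dirac (pullbackName σ v w) Set.univ := by
    rw [Measure.coe_finset_sum, Finset.sum_apply]
  rw [empMeasure, Measure.smul_apply, h1]
  simp only [measure_univ, Finset.sum_const, Finset.card_univ, nsmul_eq_mul, mul_one,
    smul_eq_mul]
  exact ENNReal.inv_mul_cancel (by exact_mod_cast Fintype.card_ne_zero) (by simp)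

/-- The empirical distribution of `w : V → A`, as a probability measure. -/
noncomputable def empDist {A V : Type} [MeasurableSpace A] [Fintype V] [Nonempty V]
    (σ : Γ → Equiv.Perm V) (w : V → A) : ProbabilityMeasure (Γ → A) :=
  ⟨empMeasure σ w, ⟨empMeasure_univ σ w⟩⟩

/-- The empirical distribution of a microstate for the `i`-th term of a sofic
approximation sequence. -/
noncomputable def empDistAt {A : Type} [MeasurableSpace A] (S : SoficApprox Γ) (i : ℕ)
    (w : Fin (S.n i) → A) : ProbabilityMeasure (Γ → A) :=
  haveI : Nonempty (Fin (S.n i)) := ⟨⟨0, S.n_pos i⟩⟩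
  empDist (S.σ i) w

/-- Extended-real logarithm of an extended nonnegative real. -/
noncomputable def elog (x : ℝ≥0∞) : EReal :=
  if x = 0 then ⊥ else if x = ⊤ then ⊤ else ((Real.log x.toReal : ℝ) : EReal)

/-- Extended-real logarithm of an extended real. -/
noncomputable def elogE (x : EReal) : EReal :=
  if x = ⊤ then ⊤ else if x ≤ 0 then ⊥ else ((Real.log x.toReal : ℝ) : EReal)

/-- The finite-level pressure `P(f, U, σ_i)`: the normalized logarithm of the sum of
`exp (Σ_v f(ξ_{σ_i,v}(w)))` over all microstates `w` whose empirical distribution lies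
in `U`. -/
noncomputable def pressAt {A : Type} [MeasurableSpace A] [Fintype A]
    (S : SoficApprox Γ) (i : ℕ) (f : (Γ → A) → ℝ)
    (U : Set (ProbabilityMeasure (Γ → A))) : EReal :=
  (((S.n i : ℝ)⁻¹ : ℝ) : EReal) *
    elog (∑ w : Fin (S.n i) → A,
      Set.indicator U
        (fun _ => ENNReal.ofReal (Real.exp (∑ v, f (pullbackName (S.σ i) v w))))
        (empDistAt S i w))

/-- The probability measures giving full mass to `X`. -/
def ProbOn {Γ A : Type} [Group Γ] [MeasurableSpace A] (X : Set (Γ → A)) :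
    Set (ProbabilityMeasure (Γ → A)) :=
  {ν | ν.toMeasure X = 1}

/-- Invariance of a measure under the shift action. -/
def ShiftInvariantM {A : Type} [MeasurableSpace A] (μ : Measure (Γ → A)) : Prop :=
  ∀ g : Γ, Measure.map (shiftAct g) μ = μ

/-- The sofic topological pressure of the subshift `X` with respect to `f` and the sofic
approximation sequence `S`; microstates are constrained to have empirical distribution in
arbitrarily small neighborhoods of the set of probability measures supported on `X`. -/
noncomputable def topPressure {A : Type} [MeasurableSpace A] [Fintype A] [TopologicalSpace A]
    [OpensMeasurableSpace (Γ → A)]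
    (S : SoficApprox Γ) (X : Set (Γ → A)) (f : (Γ → A) → ℝ) : EReal :=
  ⨅ (U : Set (ProbabilityMeasure (Γ → A))) (_ : IsOpen U) (_ : ProbOn X ⊆ U),
    Filter.limsup (fun i => pressAt S i f U) Filter.atTop

/-- The measure-theoretic sofic pressure of `μ` with respect to `f` and `S`. -/
noncomputable def measPressure {A : Type} [MeasurableSpace A] [Fintype A] [TopologicalSpace A]
    [OpensMeasurableSpace (Γ → A)]
    (S : SoficApprox Γ) (μ : ProbabilityMeasure (Γ → A)) (f : (Γ → A) → ℝ) : EReal :=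
  ⨅ (U : Set (ProbabilityMeasure (Γ → A))) (_ : IsOpen U) (_ : μ ∈ U),
    Filter.limsup (fun i => pressAt S i f U) Filter.atTop

/-- `μ` is an equilibrium measure on the subshift `X` for the potential `f` with respect to
the sofic approximation sequence `S`. -/
def IsEquilibrium {A : Type} [MeasurableSpace A] [Fintype A] [TopologicalSpace A]
    [OpensMeasurableSpace (Γ → A)]
    (S : SoficApprox Γ) (X : Set (Γ → A)) (f : (Γ → A) → ℝ)
    (μ : ProbabilityMeasure (Γ → A)) : Prop :=
  μ.toMeasure X = 1 ∧ ShiftInvariantM μ.toMeasure ∧ measPressure S μ f = topPressure S X f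

end Sofic


section AuxTMP

variable {Γ : Type} [Group Γ] [DecidableEq Γ] {A : Type}

/-- Interchangeability is monotone in the support set, provided the two patterns agree
off the smaller set. -/
lemma interchangeable_mono {X : Set (Γ → A)} {F F' : Finset Γ} (hFF : F ⊆ F') {x y : Γ → A}
    (hxy : ∀ g, g ∉ F → x g = y g) (h : Interchangeable X F x y) :
    Interchangeable X F' x y := by
  intro z
  have h1 : overwrite F' x z = overwrite F x (overwrite F' x z) := by
    funext g
    by_cases hg : g ∈ F
    · simp [overwrite, hg, hFF hg]
    · by_cases hg' : g ∈ F' <;> simp [overwrite, hg, hg']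
  have h2 : overwrite F' y z = overwrite F y (overwrite F' x z) := by
    funext g
    by_cases hg : g ∈ F
    · simp [overwrite, hg, hFF hg]
    · by_cases hg' : g ∈ F' <;> simp [overwrite, hg, hg', hxy g hg]
  rw [h1, h2]
  exact h _

lemma tmp_glue {X : Set (Γ → A)} {A₀ B : Finset Γ} (hAB : A₀ ⊆ B)
    (hB : ∀ x ∈ X, ∀ y ∈ X, (∀ g ∈ B \ A₀, x g = y g) →
      (fun g => if g ∈ B then x g else y g) ∈ X)
    {x y : Γ → A} (hy : y ∈ X) (hxy : ∀ g, g ∉ A₀ → x g = y g)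
    {z : Γ → A} (h : overwrite B x z ∈ X) : overwrite B y z ∈ X := by
  have key := hB y hy _ h (fun g hg => by
    obtain ⟨hgB, hgA⟩ := Finset.mem_sdiff.mp hg
    simp only [overwrite, if_pos hgB]
    exact (hxy g hgA).symm)
  have : (fun g => if g ∈ B then y g else (overwrite B x z) g) = overwrite B y z := by
    funext g
    by_cases hg : g ∈ B <;> simp [overwrite, hg]
  rwa [this] at key

end AuxTMP

/-- **The topological Markov property characterizes `T⁰(X) = T(X)`.**
A subshift `X ⊆ A^Γ` satisfies the topological Markov property if and only if the étale
asymptotic relation coincides with the asymptotic relation. Consequently, if `X` has the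
TMP and `f : X → ℝ` is such that the series defining `Ψ_f` is absolutely convergent on
`T(X)`, then a Borel probability measure on `X` is Gibbs with respect to `f` if and only if
it is étale Gibbs with respect to `f`. -/
theorem hasTMP_iff_etaleRel_eq_asympRel
    {Γ : Type} [Group Γ] [Countable Γ] [DecidableEq Γ]
    {A : Type} [Fintype A] [TopologicalSpace A] [DiscreteTopology A]
    [MeasurableSpace A] [BorelSpace A]
    (X : Set (Γ → A)) (hX : IsSubshift X) :
    (HasTMP X ↔ etaleRel X = asympRel X) ∧
    (HasTMP X →
      ∀ f : (Γ → A) → ℝ,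
        (∀ p ∈ asympRel X,
          Summable (fun g : Γ => f (shiftAct g p.2) - f (shiftAct g p.1))) →
        ∀ μ : Measure (Γ → A), IsProbabilityMeasure μ → μ X = 1 →
          (IsGibbsWrt (asympRel X) (cocycle f) μ ↔ IsGibbsWrt (etaleRel X) (cocycle f) μ)) := by
  have key : HasTMP X ↔ etaleRel X = asympRel X := by
    constructor
    · intro hTMP
      apply Set.Subset.antisymm
      · intro p hp
        obtain ⟨F, hF⟩ := Set.mem_iUnion.mp hp
        exact Set.mem_iUnion.mpr ⟨F, hF.1⟩
      · rintro ⟨x, y⟩ hp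
        obtain ⟨A₀, hx, hy, hoff⟩ := Set.mem_iUnion.mp hp
        obtain ⟨B, hAB, hB⟩ := hTMP A₀
        refine Set.mem_iUnion.mpr ⟨B, ⟨⟨hx, hy, fun g hg => hoff g (fun h => hg (hAB h))⟩, ?_⟩⟩
        intro z
        constructor
        · exact fun h => tmp_glue hAB hB hy hoff h
        · exact fun h => tmp_glue hAB hB hx (fun g hg => (hoff g hg).symm) h
    · intro hEq A₀
      by_contra hcon
      push_neg at hcon
      obtain ⟨e, he⟩ := exists_surjective_nat Γ
      set Bn : ℕ → Finset Γ := fun n => A₀ ∪ (Finset.range n).image e with hBndef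
      have hA₀Bn : ∀ n, A₀ ⊆ Bn n := fun n => Finset.subset_union_left
      have hmemBn : ∀ g : Γ, ∀ᶠ n in atTop, g ∈ Bn n := by
        intro g
        obtain ⟨k, hk⟩ := he g
        filter_upwards [eventually_ge_atTop (k + 1)] with n hn
        exact Finset.mem_union_right _
          (Finset.mem_image.mpr ⟨k, Finset.mem_range.mpr hn, hk⟩)
      choose x hx y hy hagree hnot using fun n : ℕ => hcon (Bn n) (hA₀Bn n)
      have hXc : IsCompact X := hX.1.isCompact
      obtain ⟨xl, hxlX, φ, hφ, hxt⟩ := hXc.tendsto_subseq hx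
      obtain ⟨yl, hylX, ψ, hψ, hyt⟩ := hXc.tendsto_subseq (fun n => hy (φ n))
      set ρ : ℕ → ℕ := φ ∘ ψ with hρdef
      have hρ : StrictMono ρ := hφ.comp hψ
      have hxt' : Tendsto (fun n => x (ρ n)) atTop (𝓝 xl) := by
        have : (fun n => x (ρ n)) = (x ∘ φ) ∘ ψ := rfl
        rw [this]
        exact hxt.comp hψ.tendsto_atTop
      have hyt' : Tendsto (fun n => y (ρ n)) atTop (𝓝 yl) := hyt
      have hev : ∀ (u : ℕ → Γ → A) (l : Γ → A), Tendsto u atTop (𝓝 l) →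
          ∀ F : Finset Γ, ∀ᶠ n in atTop, ∀ g ∈ F, u n g = l g := by
        intro u l hu F
        rw [Filter.eventually_all_finset]
        intro g _
        have hg := tendsto_pi_nhds.mp hu g
        rw [nhds_discrete] at hg
        exact Filter.tendsto_pure.mp hg
      have hpair : (xl, yl) ∈ asympRel X := by
        refine Set.mem_iUnion.mpr ⟨A₀, hxlX, hylX, fun g hg => ?_⟩
        have h1 := hev _ _ hxt' {g}
        have h2 := hev _ _ hyt' {g}
        have h3 : ∀ᶠ n in atTop, g ∈ Bn (ρ n) :=
          hρ.tendsto_atTop.eventually (hmemBn g)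
        obtain ⟨n, hn1, hn2, hn3⟩ := (h1.and (h2.and h3)).exists
        have hxy := hagree (ρ n) g (Finset.mem_sdiff.mpr ⟨hn3, hg⟩)
        rw [show (xl, yl).1 g = xl g from rfl, show (xl, yl).2 g = yl g from rfl,
          ← hn1 g (Finset.mem_singleton_self g), ← hn2 g (Finset.mem_singleton_self g)]
        exact hxy
      rw [← hEq] at hpair
      obtain ⟨F, hF⟩ := Set.mem_iUnion.mp hpair
      obtain ⟨⟨_, _, hFoff⟩, hFint⟩ := hF
      set F' : Finset Γ := F ∪ A₀ with hF'def
      have hint' : Interchangeable X F' xl yl :=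
        interchangeable_mono Finset.subset_union_left hFoff hFint
      have hA₀F' : A₀ ⊆ F' := Finset.subset_union_right
      have hevF' : ∀ᶠ n in atTop, (∀ g ∈ F', g ∈ Bn (ρ n)) ∧
          (∀ g ∈ F', x (ρ n) g = xl g) ∧ (∀ g ∈ F', y (ρ n) g = yl g) := by
        have hA : ∀ᶠ n in atTop, ∀ g ∈ F', g ∈ Bn (ρ n) := by
          have : ∀ᶠ m in atTop, ∀ g ∈ F', g ∈ Bn m :=
            (Filter.eventually_all_finset F').mpr (fun g _ => hmemBn g)
          exact hρ.tendsto_atTop.eventually this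
        exact hA.and ((hev _ _ hxt' F').and (hev _ _ hyt' F'))
      obtain ⟨n, hnB, hnx, hny⟩ := hevF'.exists
      apply hnot (ρ n)
      show overwrite (Bn (ρ n)) (x (ρ n)) (y (ρ n)) ∈ X
      have heq1 : overwrite (Bn (ρ n)) (x (ρ n)) (y (ρ n)) = overwrite F' xl (y (ρ n)) := by
        funext g
        by_cases hg : g ∈ F'
        · simp [overwrite, hg, hnB g hg, hnx g hg]
        · by_cases hg' : g ∈ Bn (ρ n)
          · have : g ∉ A₀ := fun h => hg (hA₀F' h)
            simp only [overwrite, if_pos hg', if_neg hg]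
            exact hagree (ρ n) g (Finset.mem_sdiff.mpr ⟨hg', this⟩)
          · simp [overwrite, hg, hg']
      have heq2 : overwrite F' yl (y (ρ n)) = y (ρ n) := by
        funext g
        by_cases hg : g ∈ F' <;> simp [overwrite, hg]
        exact (hny g hg).symm
      rw [heq1]
      exact (hint' _).mpr (by rw [heq2]; exact hy (ρ n))
  refine ⟨key, ?_⟩
  intro hTMP f _ μ _ _
  rw [key.mp hTMP]
end

section
/- Let Γ be a countable group, X a compact metrizable space, and Σ = (σ_i : Γ → Sym(V_i)) a sofic approximation sequence of Γ. For every ε > 0, every g ∈ Γ and every cylinder open set U ⊆ X^Γ, there is N ∈ ℕ such that for all i ≥ N and all Borel probability measures ν_i on X^{V_i}, |ζ_{σ_i}(ν_i)(U) − (g·ζ_{σ_i}(ν_i))(U)| ≤ ε. In particular, any weak-* limit of a sequence (ζ_{σ_i}(ν_i))_{i∈ℕ}, with ν_i ∈ Prob(X^{V_i}), is a Γ-invariant Borel probability measure on X^Γ. -/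
open MeasureTheory Filter Topology Pointwise
open scoped ENNReal NNReal

section AuxProof

open MeasureTheory Filter Topology

variable {Γ : Type} [Group Γ]

lemma measurable_pullbackName {X V : Type} [MeasurableSpace X] (σ : Γ → Equiv.Perm V) (v : V) :
    Measurable (fun w : V → X => pullbackName σ v w) :=
  measurable_pi_lambda _ fun _ => measurable_pi_apply _

lemma continuous_shiftAct {X : Type} [TopologicalSpace X] (g : Γ) :
    Continuous (shiftAct (A := X) g) :=
  continuous_pi fun _ => continuous_apply _

lemma measurable_shiftAct {X : Type} [MeasurableSpace X] (g : Γ) :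
    Measurable (shiftAct (A := X) g) :=
  measurable_pi_lambda _ fun _ => measurable_pi_apply _

lemma empMeasure_apply {X V : Type} [MeasurableSpace X] [Fintype V] (σ : Γ → Equiv.Perm V)
    (w : V → X) {s : Set (Γ → X)} (hs : MeasurableSet s) :
    empMeasure σ w s
      = (Fintype.card V : ℝ≥0∞)⁻¹ * ∑ v : V, s.indicator 1 (pullbackName σ v w) := by
  rw [empMeasure, Measure.smul_apply]
  have h1 : ((∑ v : V, Measure.dirac (pullbackName σ v w)) s)
      = ∑ v : V, Measure.dirac (pullbackName σ v w) s := by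
    rw [Measure.coe_finset_sum, Finset.sum_apply]
  rw [h1, smul_eq_mul]
  simp_rw [Measure.dirac_apply' _ hs]

lemma lintegral_empMeasure {X V : Type} [MeasurableSpace X] [Fintype V] (σ : Γ → Equiv.Perm V)
    (w : V → X) {f : (Γ → X) → ℝ≥0∞} (hf : Measurable f) :
    ∫⁻ x, f x ∂(empMeasure σ w)
      = (Fintype.card V : ℝ≥0∞)⁻¹ * ∑ v : V, f (pullbackName σ v w) := by
  rw [empMeasure, lintegral_smul_measure, lintegral_finset_sum_measure]
  simp_rw [lintegral_dirac' _ hf]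
  rw [smul_eq_mul]

lemma measurable_empMeasure {X V : Type} [MeasurableSpace X] [Fintype V]
    (σ : Γ → Equiv.Perm V) :
    Measurable (fun w : V → X => empMeasure σ w) := by
  apply Measure.measurable_of_measurable_coe
  intro s hs
  simp_rw [empMeasure_apply σ _ hs]
  exact (Finset.measurable_sum _ fun v _ =>
    (measurable_one.indicator hs).comp (measurable_pullbackName σ v)).const_mul _

open Classical in
noncomputable def badSet (S : SoficApprox Γ) (i : ℕ) (g : Γ) (F : Finset Γ) :
    Finset (Fin (S.n i)) :=
  Finset.univ.filter fun v => ∃ s ∈ F, S.σ i (s⁻¹ * g) v ≠ S.σ i s⁻¹ (S.σ i g v)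

lemma mem_badSet {S : SoficApprox Γ} {i : ℕ} {g : Γ} {F : Finset Γ} {v : Fin (S.n i)} :
    v ∈ badSet S i g F ↔ ∃ s ∈ F, S.σ i (s⁻¹ * g) v ≠ S.σ i s⁻¹ (S.σ i g v) := by
  classical
  simp [badSet]

lemma pairBad_tendsto (S : SoficApprox Γ) (s t : Γ) :
    Tendsto (fun i => ((Finset.univ.filter fun v : Fin (S.n i) =>
        ¬ S.σ i (s * t) v = S.σ i s (S.σ i t v)).card : ℝ) / (S.n i)) atTop (𝓝 0) := by
  have h := S.almost_action s t
  have key : ∀ i, ((Finset.univ.filter fun v : Fin (S.n i) =>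
        ¬ S.σ i (s * t) v = S.σ i s (S.σ i t v)).card : ℝ) / (S.n i)
      = 1 - ((Finset.univ.filter fun v : Fin (S.n i) =>
        S.σ i (s * t) v = S.σ i s (S.σ i t v)).card : ℝ) / (S.n i) := by
    intro i
    have hn : (0 : ℝ) < S.n i := by exact_mod_cast S.n_pos i
    have hc : (Finset.univ.filter fun v : Fin (S.n i) =>
          S.σ i (s * t) v = S.σ i s (S.σ i t v)).card
        + (Finset.univ.filter fun v : Fin (S.n i) =>
          ¬ S.σ i (s * t) v = S.σ i s (S.σ i t v)).card = S.n i := by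
      rw [Finset.card_filter_add_card_filter_not]
      simp
    have hcast : ((Finset.univ.filter fun v : Fin (S.n i) =>
          ¬ S.σ i (s * t) v = S.σ i s (S.σ i t v)).card : ℝ)
        = (S.n i : ℝ) - ((Finset.univ.filter fun v : Fin (S.n i) =>
          S.σ i (s * t) v = S.σ i s (S.σ i t v)).card : ℝ) := by
      have := congrArg (fun k : ℕ => (k : ℝ)) hc
      push_cast at this
      linarith
    rw [hcast, sub_div, div_self hn.ne']
  simp only [key]
  have h2 : Tendsto (fun i => 1 - ((Finset.univ.filter fun v : Fin (S.n i) =>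
      S.σ i (s * t) v = S.σ i s (S.σ i t v)).card : ℝ) / (S.n i)) atTop (𝓝 (1 - 1)) :=
    tendsto_const_nhds.sub h
  simpa using h2

lemma badSet_frac_tendsto (S : SoficApprox Γ) (g : Γ) (F : Finset Γ) :
    Tendsto (fun i => ((badSet S i g F).card : ℝ) / (S.n i)) atTop (𝓝 0) := by
  classical
  refine squeeze_zero (fun i => by positivity)
    (g := fun i => ∑ s ∈ F, ((Finset.univ.filter fun v : Fin (S.n i) =>
      ¬ S.σ i (s⁻¹ * g) v = S.σ i s⁻¹ (S.σ i g v)).card : ℝ) / (S.n i)) (fun i => ?_) ?_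
  · have hn : (0 : ℝ) < S.n i := by exact_mod_cast S.n_pos i
    have hsub : badSet S i g F ⊆ F.biUnion fun s =>
        Finset.univ.filter fun v : Fin (S.n i) =>
          ¬ S.σ i (s⁻¹ * g) v = S.σ i s⁻¹ (S.σ i g v) := by
      intro v hv
      obtain ⟨s, hs, hne⟩ := mem_badSet.mp hv
      exact Finset.mem_biUnion.mpr ⟨s, hs, Finset.mem_filter.mpr ⟨Finset.mem_univ _, hne⟩⟩
    have hcard : ((badSet S i g F).card : ℝ)
        ≤ ∑ s ∈ F, ((Finset.univ.filter fun v : Fin (S.n i) =>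
          ¬ S.σ i (s⁻¹ * g) v = S.σ i s⁻¹ (S.σ i g v)).card : ℝ) := by
      have := le_trans (Finset.card_le_card hsub) Finset.card_biUnion_le
      exact_mod_cast this
    rw [← Finset.sum_div]
    exact (div_le_div_iff_of_pos_right hn).mpr hcard
  · have h0 : Tendsto (fun i => ∑ s ∈ F, ((Finset.univ.filter fun v : Fin (S.n i) =>
        ¬ S.σ i (s⁻¹ * g) v = S.σ i s⁻¹ (S.σ i g v)).card : ℝ) / (S.n i)) atTop
        (𝓝 (∑ s ∈ F, 0)) :=
      tendsto_finset_sum _ fun s _ => pairBad_tendsto S s⁻¹ g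
    simpa using h0

lemma shift_pullback_eq {X V : Type} (σ : Γ → Equiv.Perm V) (g : Γ) (v : V) (w : V → X) (s : Γ)
    (h : σ (s⁻¹ * g) v = σ s⁻¹ (σ g v)) :
    shiftAct g (pullbackName σ v w) s = pullbackName σ (σ g v) w s := by
  simp only [shiftAct, pullbackName, mul_inv_rev, inv_inv]
  rw [h]

end AuxProof
section Part1Proof

open MeasureTheory Filter Topology

variable {Γ : Type} [Group Γ]

lemma prob_toReal_le_one {α : Type} [MeasurableSpace α] (ν : Measure α)
    [IsProbabilityMeasure ν] (s : Set α) : (ν s).toReal ≤ 1 := by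
  have h := prob_le_one (μ := ν) (s := s)
  have := ENNReal.toReal_mono ENNReal.one_ne_top h
  simpa using this

lemma bind_emp_toReal {X : Type} [MeasurableSpace X]
    (S : SoficApprox Γ) (i : ℕ) (ν : Measure (Fin (S.n i) → X)) [IsProbabilityMeasure ν]
    {T : Set (Γ → X)} (hT : MeasurableSet T) :
    ((ν.bind fun w => empMeasure (S.σ i) w) T).toReal
      = (S.n i : ℝ)⁻¹ * ∑ v : Fin (S.n i), (ν (pullbackName (S.σ i) v ⁻¹' T)).toReal := by
  rw [Measure.bind_apply hT (measurable_empMeasure (S.σ i)).aemeasurable]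
  have h1 : ∀ w : Fin (S.n i) → X, empMeasure (S.σ i) w T
      = (Fintype.card (Fin (S.n i)) : ℝ≥0∞)⁻¹
          * ∑ v : Fin (S.n i), T.indicator 1 (pullbackName (S.σ i) v w) :=
    fun w => empMeasure_apply (S.σ i) w hT
  simp_rw [h1]
  have h2 : ∀ v : Fin (S.n i),
      (fun w : Fin (S.n i) → X => T.indicator (1 : (Γ → X) → ℝ≥0∞) (pullbackName (S.σ i) v w))
        = (pullbackName (S.σ i) v ⁻¹' T).indicator 1 := by
    intro v; funext w
    by_cases h : pullbackName (S.σ i) v w ∈ T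
    · simp [h, Set.indicator_of_mem, Set.mem_preimage]
    · simp [h]
  have hmeasv : ∀ v : Fin (S.n i), Measurable
      (fun w : Fin (S.n i) → X => T.indicator (1 : (Γ → X) → ℝ≥0∞) (pullbackName (S.σ i) v w)) :=
    fun v => (measurable_one.indicator hT).comp (measurable_pullbackName (S.σ i) v)
  rw [lintegral_const_mul _ (Finset.measurable_sum _ fun v _ => hmeasv v)]
  rw [lintegral_finset_sum _ fun v _ => hmeasv v]
  have h3 : ∀ v : Fin (S.n i),
      ∫⁻ w, T.indicator (1 : (Γ → X) → ℝ≥0∞) (pullbackName (S.σ i) v w) ∂ν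
        = ν (pullbackName (S.σ i) v ⁻¹' T) := by
    intro v
    rw [h2 v, lintegral_indicator_one ((measurable_pullbackName (S.σ i) v) hT)]
  simp_rw [h3]
  rw [ENNReal.toReal_mul, ENNReal.toReal_sum (fun v _ => measure_ne_top ν _)]
  congr 1
  simp [Fintype.card_fin]

lemma part1_core {X : Type} [TopologicalSpace X] [MeasurableSpace X] [OpensMeasurableSpace X]
    (S : SoficApprox Γ) (i : ℕ) (g : Γ) (J : Finset Γ) (Us : Γ → Set X)
    (hUs : ∀ s, IsOpen (Us s)) (ν : Measure (Fin (S.n i) → X)) [IsProbabilityMeasure ν] :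
    |((ν.bind fun w => empMeasure (S.σ i) w) {x : Γ → X | ∀ s ∈ J, x s ∈ Us s}).toReal -
      ((Measure.map (shiftAct g) (ν.bind fun w => empMeasure (S.σ i) w))
        {x : Γ → X | ∀ s ∈ J, x s ∈ Us s}).toReal|
      ≤ ((badSet S i g J).card : ℝ) / (S.n i) := by
  classical
  set U : Set (Γ → X) := {x : Γ → X | ∀ s ∈ J, x s ∈ Us s} with hUdef
  have hU : MeasurableSet U := by
    have hrw : U = ⋂ s ∈ J, (fun x : Γ → X => x s) ⁻¹' Us s := by
      ext x; simp [hUdef]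
    rw [hrw]
    exact MeasurableSet.biInter J.countable_toSet fun s _ =>
      (hUs s).measurableSet.preimage (measurable_pi_apply s)
  have hU' : MeasurableSet (shiftAct g ⁻¹' U) := hU.preimage (measurable_shiftAct g)
  rw [Measure.map_apply (measurable_shiftAct g) hU]
  rw [bind_emp_toReal S i ν hU, bind_emp_toReal S i ν hU']
  have hre : ∑ v : Fin (S.n i), (ν (pullbackName (S.σ i) v ⁻¹' U)).toReal
      = ∑ v : Fin (S.n i), (ν (pullbackName (S.σ i) (S.σ i g v) ⁻¹' U)).toReal :=
    (Equiv.sum_comp (S.σ i g) fun v => (ν (pullbackName (S.σ i) v ⁻¹' U)).toReal).symm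
  rw [hre, ← mul_sub, abs_mul, ← Finset.sum_sub_distrib,
    abs_of_nonneg (inv_nonneg.mpr (Nat.cast_nonneg _)), div_eq_inv_mul]
  refine mul_le_mul_of_nonneg_left ?_ (inv_nonneg.mpr (Nat.cast_nonneg _))
  refine le_trans (Finset.abs_sum_le_sum_abs _ _) ?_
  refine le_trans (Finset.sum_le_sum (g := fun v => if v ∈ badSet S i g J then (1:ℝ) else 0)
    fun v _ => ?_) ?_
  · by_cases hv : v ∈ badSet S i g J
    · rw [if_pos hv]
      have h1 := prob_toReal_le_one ν (pullbackName (S.σ i) (S.σ i g v) ⁻¹' U)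
      have h2 := prob_toReal_le_one ν (pullbackName (S.σ i) v ⁻¹' (shiftAct g ⁻¹' U))
      have h3 : (0:ℝ) ≤ (ν (pullbackName (S.σ i) (S.σ i g v) ⁻¹' U)).toReal :=
        ENNReal.toReal_nonneg
      have h4 : (0:ℝ) ≤ (ν (pullbackName (S.σ i) v ⁻¹' (shiftAct g ⁻¹' U))).toReal :=
        ENNReal.toReal_nonneg
      rw [abs_le]
      constructor <;> linarith
    · rw [if_neg hv]
      have hgood : ∀ s ∈ J, S.σ i (s⁻¹ * g) v = S.σ i s⁻¹ (S.σ i g v) := by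
        intro s hs
        by_contra hne
        exact hv (mem_badSet.mpr ⟨s, hs, hne⟩)
      have hset : pullbackName (S.σ i) (S.σ i g v) ⁻¹' U
          = pullbackName (S.σ i) v ⁻¹' (shiftAct g ⁻¹' U) := by
        ext w
        simp only [Set.mem_preimage, hUdef, Set.mem_setOf_eq]
        have hagree : ∀ s ∈ J, shiftAct g (pullbackName (S.σ i) v w) s
            = pullbackName (S.σ i) (S.σ i g v) w s :=
          fun s hs => shift_pullback_eq (S.σ i) g v w s (hgood s hs)
        constructor
        · intro h s hs; rw [hagree s hs]; exact h s hs
        · intro h s hs; rw [← hagree s hs]; exact h s hs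
      rw [hset]
      simp
  · rw [Finset.sum_ite_mem, Finset.univ_inter, Finset.sum_const, nsmul_eq_mul, mul_one]

end Part1Proof
section Part2Proof

set_option linter.unusedSectionVars false

open MeasureTheory Filter Topology BoundedContinuousFunction
open scoped Uniformity

variable {Γ : Type} [Group Γ]

lemma exists_modulus {X : Type} [TopologicalSpace X] [CompactSpace X]
    [TopologicalSpace.MetrizableSpace X]
    (f : (Γ → X) →ᵇ ℝ≥0) {ε : ℝ} (hε : 0 < ε) :
    ∃ F : Finset Γ, ∀ x y : Γ → X, (∀ s ∈ F, x s = y s) → dist (f x) (f y) ≤ ε := by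
  letI : MetricSpace X := TopologicalSpace.metrizableSpaceMetric X
  have hfu : UniformContinuous f := CompactSpace.uniformContinuous_of_continuous f.continuous
  have h1 : ((fun p : (Γ → X) × (Γ → X) => (f p.1, f p.2)) ⁻¹'
      {p : ℝ≥0 × ℝ≥0 | dist p.1 p.2 < ε}) ∈ 𝓤 (Γ → X) :=
    Filter.mem_map.mp (hfu (Metric.dist_mem_uniformity hε))
  rw [Pi.uniformity] at h1
  obtain ⟨I, hIfin, V, hV, hVeq⟩ := Filter.mem_iInf.mp h1
  refine ⟨hIfin.toFinset, fun x y hxy => ?_⟩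
  have hmem : (x, y) ∈ ⋂ i, V i := by
    refine Set.mem_iInter.mpr fun i => ?_
    obtain ⟨W, hW, hsub⟩ := Filter.mem_comap.mp (hV i)
    apply hsub
    have hxyi : x (i : Γ) = y (i : Γ) := hxy i (hIfin.mem_toFinset.mpr i.2)
    show ((x, y).1 (i : Γ), (x, y).2 (i : Γ)) ∈ W
    simp only [hxyi]
    exact refl_mem_uniformity hW
  rw [← hVeq] at hmem
  exact le_of_lt hmem

lemma coe_le_coe_add_ofReal {a b : ℝ≥0} {r : ℝ} (h : dist a b ≤ r) :
    (a : ℝ≥0∞) ≤ (b : ℝ≥0∞) + ENNReal.ofReal r := by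
  have hr : 0 ≤ r := le_trans dist_nonneg h
  have hab : (a : ℝ) ≤ (b : ℝ) + r := by
    rw [NNReal.dist_eq] at h
    have := le_abs_self ((a : ℝ) - b)
    linarith
  calc (a : ℝ≥0∞) = ENNReal.ofReal (a : ℝ) := ENNReal.ofReal_coe_nnreal.symm
    _ ≤ ENNReal.ofReal ((b : ℝ) + r) := ENNReal.ofReal_le_ofReal hab
    _ = ENNReal.ofReal (b : ℝ) + ENNReal.ofReal r := ENNReal.ofReal_add b.coe_nonneg hr
    _ = (b : ℝ≥0∞) + ENNReal.ofReal r := by rw [ENNReal.ofReal_coe_nnreal]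

lemma lintegral_bind_emp {X : Type} [TopologicalSpace X] [MeasurableSpace X] [BorelSpace X]
    [SecondCountableTopology X]
    (S : SoficApprox Γ) (i : ℕ) (ν : Measure (Fin (S.n i) → X))
    {h : (Γ → X) → ℝ≥0∞} (hh : Measurable h) :
    ∫⁻ x, h x ∂(ν.bind fun w => empMeasure (S.σ i) w)
      = ∫⁻ w, (Fintype.card (Fin (S.n i)) : ℝ≥0∞)⁻¹
          * ∑ v : Fin (S.n i), h (pullbackName (S.σ i) v w) ∂ν := by
  rw [Measure.lintegral_bind (measurable_empMeasure (S.σ i)).aemeasurable hh.aemeasurable]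
  simp_rw [fun w => lintegral_empMeasure (S.σ i) w hh]

lemma part2_core {X : Type} [TopologicalSpace X] [CompactSpace X]
    [TopologicalSpace.MetrizableSpace X] [SecondCountableTopology X]
    [MeasurableSpace X] [BorelSpace X] [Countable Γ]
    (S : SoficApprox Γ) (f : (Γ → X) →ᵇ ℝ≥0) (g : Γ) {ε : ℝ} (hε : 0 < ε) :
    ∀ᶠ i in atTop, ∀ ν : Measure (Fin (S.n i) → X), IsProbabilityMeasure ν →
      (∫⁻ x, f x ∂(Measure.map (shiftAct g) (ν.bind fun w => empMeasure (S.σ i) w))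
        ≤ ∫⁻ x, f x ∂(ν.bind fun w => empMeasure (S.σ i) w) + ENNReal.ofReal ε) ∧
      (∫⁻ x, f x ∂(ν.bind fun w => empMeasure (S.σ i) w)
        ≤ ∫⁻ x, f x ∂(Measure.map (shiftAct g) (ν.bind fun w => empMeasure (S.σ i) w))
          + ENNReal.ofReal ε) := by
  classical
  obtain ⟨F, hF⟩ := exists_modulus f (half_pos hε)
  obtain ⟨C, hC⟩ := f.map_bounded'
  set D : ℝ := max C 0 with hD
  have hD0 : (0:ℝ) ≤ D := le_max_right _ _
  have hCD : ∀ x y : Γ → X, dist (f x) (f y) ≤ D := fun x y => le_trans (hC x y) (le_max_left _ _)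
  have hbad := (badSet_frac_tendsto S g F).mul_const D
  rw [zero_mul] at hbad
  have hev : ∀ᶠ i in atTop, ((badSet S i g F).card : ℝ) / (S.n i) * D < ε / 2 :=
    hbad.eventually_lt_const (half_pos hε)
  filter_upwards [hev] with i hi ν hν
  haveI := hν
  set σ := S.σ i with hσdef
  set B := badSet S i g F with hBdef
  set e : Fin (S.n i) → ℝ := fun v => if v ∈ B then D else ε / 2 with hedef
  have he0 : ∀ v, 0 ≤ e v := by
    intro v; rw [hedef]; dsimp only
    split
    · exact hD0
    · linarith
  have hdist : ∀ (w : Fin (S.n i) → X) (v : Fin (S.n i)),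
      dist (f (shiftAct g (pullbackName σ v w))) (f (pullbackName σ (σ g v) w)) ≤ e v := by
    intro w v
    by_cases hv : v ∈ B
    · rw [hedef]; simp only [hv, if_true]; exact hCD _ _
    · rw [hedef]; simp only [hv, if_false]
      apply hF
      intro s hs
      apply shift_pullback_eq
      by_contra hne
      exact hv (mem_badSet.mpr ⟨s, hs, hne⟩)
  have herr : ∑ v : Fin (S.n i), ENNReal.ofReal (e v)
      ≤ ENNReal.ofReal ((B.card : ℝ) * D + (S.n i : ℝ) * (ε / 2)) := by
    rw [← ENNReal.ofReal_sum_of_nonneg fun v _ => he0 v]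
    apply ENNReal.ofReal_le_ofReal
    have hle : ∀ v ∈ Finset.univ, e v ≤ (if v ∈ B then D else 0) + ε / 2 := by
      intro v _; rw [hedef]; dsimp only
      split
      · linarith
      · linarith
    refine le_trans (Finset.sum_le_sum hle) ?_
    rw [Finset.sum_add_distrib, Finset.sum_ite_mem, Finset.univ_inter, Finset.sum_const,
      Finset.sum_const, Finset.card_univ, Fintype.card_fin, nsmul_eq_mul, nsmul_eq_mul]
  have hm : (0:ℝ) < S.n i := by exact_mod_cast S.n_pos i
  have hkey : (Fintype.card (Fin (S.n i)) : ℝ≥0∞)⁻¹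
      * ENNReal.ofReal ((B.card : ℝ) * D + (S.n i : ℝ) * (ε / 2)) ≤ ENNReal.ofReal ε := by
    rw [Fintype.card_fin]
    have hinv : ((S.n i : ℕ) : ℝ≥0∞)⁻¹ = ENNReal.ofReal ((S.n i : ℝ))⁻¹ := by
      rw [ENNReal.ofReal_inv_of_pos hm, ENNReal.ofReal_natCast]
    rw [hinv, ← ENNReal.ofReal_mul (by positivity)]
    apply ENNReal.ofReal_le_ofReal
    have h1 : (S.n i : ℝ)⁻¹ * ((B.card : ℝ) * D + (S.n i : ℝ) * (ε / 2))
        = (B.card : ℝ) / (S.n i) * D + ε / 2 := by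
      field_simp
    rw [h1]
    rw [hBdef]
    linarith
  have hfm : Measurable fun x : Γ → X => (f x : ℝ≥0∞) := f.measurable_coe_ennreal_comp
  have hfsm : Measurable fun x : Γ → X => (f (shiftAct g x) : ℝ≥0∞) :=
    hfm.comp (measurable_shiftAct g)
  have hLm : ∫⁻ x, (f x : ℝ≥0∞) ∂(Measure.map (shiftAct g) (ν.bind fun w => empMeasure σ w))
      = ∫⁻ w, (Fintype.card (Fin (S.n i)) : ℝ≥0∞)⁻¹
          * ∑ v : Fin (S.n i), (f (shiftAct g (pullbackName σ v w)) : ℝ≥0∞) ∂ν := by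
    rw [lintegral_map hfm (measurable_shiftAct g)]
    exact lintegral_bind_emp S i ν hfsm
  have hLp : ∫⁻ x, (f x : ℝ≥0∞) ∂(ν.bind fun w => empMeasure σ w)
      = ∫⁻ w, (Fintype.card (Fin (S.n i)) : ℝ≥0∞)⁻¹
          * ∑ v : Fin (S.n i), (f (pullbackName σ v w) : ℝ≥0∞) ∂ν :=
    lintegral_bind_emp S i ν hfm
  have hre : ∀ w : Fin (S.n i) → X,
      ∑ v : Fin (S.n i), (f (pullbackName σ v w) : ℝ≥0∞)
        = ∑ v : Fin (S.n i), (f (pullbackName σ (σ g v) w) : ℝ≥0∞) :=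
    fun w => (Equiv.sum_comp (σ g) fun v => (f (pullbackName σ v w) : ℝ≥0∞)).symm
  have hw1 : ∀ w : Fin (S.n i) → X,
      (Fintype.card (Fin (S.n i)) : ℝ≥0∞)⁻¹
          * ∑ v : Fin (S.n i), (f (shiftAct g (pullbackName σ v w)) : ℝ≥0∞)
        ≤ (Fintype.card (Fin (S.n i)) : ℝ≥0∞)⁻¹
          * ∑ v : Fin (S.n i), (f (pullbackName σ v w) : ℝ≥0∞) + ENNReal.ofReal ε := by
    intro w
    have hs1 : ∑ v : Fin (S.n i), (f (shiftAct g (pullbackName σ v w)) : ℝ≥0∞)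
        ≤ ∑ v : Fin (S.n i), (f (pullbackName σ (σ g v) w) : ℝ≥0∞)
          + ∑ v : Fin (S.n i), ENNReal.ofReal (e v) := by
      rw [← Finset.sum_add_distrib]
      exact Finset.sum_le_sum fun v _ => coe_le_coe_add_ofReal (hdist w v)
    calc (Fintype.card (Fin (S.n i)) : ℝ≥0∞)⁻¹
          * ∑ v : Fin (S.n i), (f (shiftAct g (pullbackName σ v w)) : ℝ≥0∞)
        ≤ (Fintype.card (Fin (S.n i)) : ℝ≥0∞)⁻¹
          * (∑ v : Fin (S.n i), (f (pullbackName σ (σ g v) w) : ℝ≥0∞)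
            + ∑ v : Fin (S.n i), ENNReal.ofReal (e v)) := mul_le_mul_right hs1 _
      _ = (Fintype.card (Fin (S.n i)) : ℝ≥0∞)⁻¹
            * ∑ v : Fin (S.n i), (f (pullbackName σ (σ g v) w) : ℝ≥0∞)
          + (Fintype.card (Fin (S.n i)) : ℝ≥0∞)⁻¹
            * ∑ v : Fin (S.n i), ENNReal.ofReal (e v) := by rw [mul_add]
      _ ≤ (Fintype.card (Fin (S.n i)) : ℝ≥0∞)⁻¹
            * ∑ v : Fin (S.n i), (f (pullbackName σ v w) : ℝ≥0∞) + ENNReal.ofReal ε := by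
          rw [← hre w]
          exact add_le_add_right (le_trans (mul_le_mul_right herr _) hkey) _
  have hw2 : ∀ w : Fin (S.n i) → X,
      (Fintype.card (Fin (S.n i)) : ℝ≥0∞)⁻¹
          * ∑ v : Fin (S.n i), (f (pullbackName σ v w) : ℝ≥0∞)
        ≤ (Fintype.card (Fin (S.n i)) : ℝ≥0∞)⁻¹
          * ∑ v : Fin (S.n i), (f (shiftAct g (pullbackName σ v w)) : ℝ≥0∞)
          + ENNReal.ofReal ε := by
    intro w
    have hs1 : ∑ v : Fin (S.n i), (f (pullbackName σ (σ g v) w) : ℝ≥0∞)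
        ≤ ∑ v : Fin (S.n i), (f (shiftAct g (pullbackName σ v w)) : ℝ≥0∞)
          + ∑ v : Fin (S.n i), ENNReal.ofReal (e v) := by
      rw [← Finset.sum_add_distrib]
      refine Finset.sum_le_sum fun v _ => coe_le_coe_add_ofReal ?_
      rw [dist_comm]
      exact hdist w v
    calc (Fintype.card (Fin (S.n i)) : ℝ≥0∞)⁻¹
          * ∑ v : Fin (S.n i), (f (pullbackName σ v w) : ℝ≥0∞)
        = (Fintype.card (Fin (S.n i)) : ℝ≥0∞)⁻¹
          * ∑ v : Fin (S.n i), (f (pullbackName σ (σ g v) w) : ℝ≥0∞) := by rw [← hre w]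
      _ ≤ (Fintype.card (Fin (S.n i)) : ℝ≥0∞)⁻¹
          * (∑ v : Fin (S.n i), (f (shiftAct g (pullbackName σ v w)) : ℝ≥0∞)
            + ∑ v : Fin (S.n i), ENNReal.ofReal (e v)) := mul_le_mul_right hs1 _
      _ ≤ (Fintype.card (Fin (S.n i)) : ℝ≥0∞)⁻¹
            * ∑ v : Fin (S.n i), (f (shiftAct g (pullbackName σ v w)) : ℝ≥0∞)
          + ENNReal.ofReal ε := by
          rw [mul_add]
          exact add_le_add_right (le_trans (mul_le_mul_right herr _) hkey) _
  have hmeasp : Measurable fun w : Fin (S.n i) → X =>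
      (Fintype.card (Fin (S.n i)) : ℝ≥0∞)⁻¹
        * ∑ v : Fin (S.n i), (f (pullbackName σ v w) : ℝ≥0∞) :=
    (Finset.measurable_sum _ fun v _ => hfm.comp (measurable_pullbackName σ v)).const_mul _
  have hmeass : Measurable fun w : Fin (S.n i) → X =>
      (Fintype.card (Fin (S.n i)) : ℝ≥0∞)⁻¹
        * ∑ v : Fin (S.n i), (f (shiftAct g (pullbackName σ v w)) : ℝ≥0∞) :=
    (Finset.measurable_sum _ fun v _ => hfsm.comp (measurable_pullbackName σ v)).const_mul _
  constructor
  · rw [hLm, hLp]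
    calc ∫⁻ w, (Fintype.card (Fin (S.n i)) : ℝ≥0∞)⁻¹
          * ∑ v : Fin (S.n i), (f (shiftAct g (pullbackName σ v w)) : ℝ≥0∞) ∂ν
        ≤ ∫⁻ w, ((Fintype.card (Fin (S.n i)) : ℝ≥0∞)⁻¹
          * ∑ v : Fin (S.n i), (f (pullbackName σ v w) : ℝ≥0∞) + ENNReal.ofReal ε) ∂ν :=
          lintegral_mono fun w => hw1 w
      _ = ∫⁻ w, (Fintype.card (Fin (S.n i)) : ℝ≥0∞)⁻¹
          * ∑ v : Fin (S.n i), (f (pullbackName σ v w) : ℝ≥0∞) ∂ν + ENNReal.ofReal ε := by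
          rw [lintegral_add_right _ measurable_const, lintegral_const, measure_univ, mul_one]
  · rw [hLm, hLp]
    calc ∫⁻ w, (Fintype.card (Fin (S.n i)) : ℝ≥0∞)⁻¹
          * ∑ v : Fin (S.n i), (f (pullbackName σ v w) : ℝ≥0∞) ∂ν
        ≤ ∫⁻ w, ((Fintype.card (Fin (S.n i)) : ℝ≥0∞)⁻¹
          * ∑ v : Fin (S.n i), (f (shiftAct g (pullbackName σ v w)) : ℝ≥0∞)
          + ENNReal.ofReal ε) ∂ν := lintegral_mono fun w => hw2 w
      _ = ∫⁻ w, (Fintype.card (Fin (S.n i)) : ℝ≥0∞)⁻¹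
          * ∑ v : Fin (S.n i), (f (shiftAct g (pullbackName σ v w)) : ℝ≥0∞) ∂ν
          + ENNReal.ofReal ε := by
          rw [lintegral_add_right _ measurable_const, lintegral_const, measure_univ, mul_one]

end Part2Proof
/-- **Empirical distributions are asymptotically shift-invariant.**
Let `Γ` be a countable group, `X` a compact metrizable space and `S` a sofic approximation
sequence of `Γ`. For every `ε > 0`, `g ∈ Γ` and cylinder open set `U ⊆ X^Γ` there is `N`
such that for all `i ≥ N` and every Borel probability measure `ν` on `X^{V_i}`, the measure
`ζ_{σ_i}(ν) = ν.bind (ξ_{σ_i})` satisfies `|ζ_{σ_i}(ν)(U) - (g · ζ_{σ_i}(ν))(U)| ≤ ε`.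
In particular any weak-* cluster point of a sequence `(ζ_{σ_i}(ν_i))_i` is a `Γ`-invariant
Borel probability measure on `X^Γ`. -/
theorem empirical_measures_almost_invariant
    {Γ : Type} [Group Γ] [Countable Γ]
    {X : Type} [TopologicalSpace X] [CompactSpace X] [TopologicalSpace.MetrizableSpace X]
    [SecondCountableTopology X] [MeasurableSpace X] [BorelSpace X]
    (S : SoficApprox Γ) :
    (∀ ε : ℝ, 0 < ε → ∀ g : Γ, ∀ (J : Finset Γ) (Us : Γ → Set X), (∀ s : Γ, IsOpen (Us s)) →
      ∃ N : ℕ, ∀ i ≥ N, ∀ ν : Measure (Fin (S.n i) → X), IsProbabilityMeasure ν →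
        |((ν.bind (fun w => empMeasure (S.σ i) w))
            {x : Γ → X | ∀ s ∈ J, x s ∈ Us s}).toReal -
          ((Measure.map (shiftAct g) (ν.bind (fun w => empMeasure (S.σ i) w)))
            {x : Γ → X | ∀ s ∈ J, x s ∈ Us s}).toReal| ≤ ε) ∧
    (∀ ν : (i : ℕ) → Measure (Fin (S.n i) → X), (∀ i, IsProbabilityMeasure (ν i)) →
      ∀ P : ℕ → ProbabilityMeasure (Γ → X),
        (∀ i, (P i).toMeasure = (ν i).bind (fun w => empMeasure (S.σ i) w)) →
        ∀ μ : ProbabilityMeasure (Γ → X), MapClusterPt μ Filter.atTop P →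
          ShiftInvariantM μ.toMeasure) := by
  constructor
  · intro ε hε g J Us hUs
    have h2 : ∀ᶠ i in Filter.atTop, ((badSet S i g J).card : ℝ) / (S.n i) < ε :=
      (badSet_frac_tendsto S g J).eventually_lt_const hε
    obtain ⟨N, hN⟩ := Filter.eventually_atTop.mp h2
    refine ⟨N, fun i hi ν hν => ?_⟩
    haveI := hν
    exact le_trans (part1_core S i g J Us hUs ν) (le_of_lt (hN i hi))
  · intro ν hν P hP μ hclu g
    obtain ⟨𝒰, hUle, hUtend⟩ := mapClusterPt_iff_ultrafilter.mp hclu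
    have hsm : Measurable (shiftAct (A := X) g) := measurable_shiftAct g
    haveI : IsProbabilityMeasure (Measure.map (shiftAct g) μ.toMeasure) :=
      MeasureTheory.Measure.isProbabilityMeasure_map hsm.aemeasurable
    apply MeasureTheory.ext_of_forall_lintegral_eq_of_IsFiniteMeasure
    intro f
    rw [MeasureTheory.lintegral_map f.measurable_coe_ennreal_comp hsm]
    set fg : BoundedContinuousFunction (Γ → X) ℝ≥0 :=
      f.compContinuous ⟨shiftAct g, continuous_shiftAct g⟩ with hfgdef
    have hA := MeasureTheory.ProbabilityMeasure.tendsto_iff_forall_lintegral_tendsto.mp hUtend f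
    have hB := MeasureTheory.ProbabilityMeasure.tendsto_iff_forall_lintegral_tendsto.mp hUtend fg
    have hLne : ∫⁻ x, (f x : ℝ≥0∞) ∂(μ : Measure (Γ → X)) ≠ ⊤ :=
      (BoundedContinuousFunction.lintegral_lt_top_of_nnreal _ f).ne
    have hb_eq : ∀ i, ∫⁻ x, (fg x : ℝ≥0∞) ∂((P i : Measure (Γ → X)))
        = ∫⁻ x, (f x : ℝ≥0∞)
            ∂(Measure.map (shiftAct g) ((ν i).bind fun w => empMeasure (S.σ i) w)) := by
      intro i
      rw [MeasureTheory.lintegral_map f.measurable_coe_ennreal_comp hsm, ← hP i]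
      rfl
    have hclaim : Filter.Tendsto (fun i => ∫⁻ x, (fg x : ℝ≥0∞) ∂((P i : Measure (Γ → X))))
        (𝒰 : Filter ℕ) (nhds (∫⁻ x, (f x : ℝ≥0∞) ∂(μ : Measure (Γ → X)))) := by
      rw [ENNReal.tendsto_nhds hLne]
      intro ε hε
      rcases eq_or_ne ε ⊤ with rfl | hεt
      · refine Filter.Eventually.of_forall fun i => ⟨?_, ?_⟩
        · rw [ENNReal.sub_top]; exact zero_le
        · exact le_trans le_top (by simp)
      · set δ : ℝ := ε.toReal / 2 with hδdef
        have hδpos : 0 < δ := by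
          have := ENNReal.toReal_pos hε.ne' hεt
          rw [hδdef]; linarith
        have hdd : ENNReal.ofReal δ + ENNReal.ofReal δ = ε := by
          rw [← ENNReal.ofReal_add hδpos.le hδpos.le]
          have : δ + δ = ε.toReal := by rw [hδdef]; ring
          rw [this, ENNReal.ofReal_toReal hεt]
        have hAε := (ENNReal.tendsto_nhds hLne).mp hA (ENNReal.ofReal δ)
          (ENNReal.ofReal_pos.mpr hδpos)
        have hcore : ∀ᶠ i in (𝒰 : Filter ℕ), ∀ ν' : Measure (Fin (S.n i) → X),
            IsProbabilityMeasure ν' →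
            (∫⁻ x, (f x : ℝ≥0∞)
                ∂(Measure.map (shiftAct g) (ν'.bind fun w => empMeasure (S.σ i) w))
              ≤ ∫⁻ x, (f x : ℝ≥0∞) ∂(ν'.bind fun w => empMeasure (S.σ i) w)
                + ENNReal.ofReal δ) ∧
            (∫⁻ x, (f x : ℝ≥0∞) ∂(ν'.bind fun w => empMeasure (S.σ i) w)
              ≤ ∫⁻ x, (f x : ℝ≥0∞)
                  ∂(Measure.map (shiftAct g) (ν'.bind fun w => empMeasure (S.σ i) w))
                + ENNReal.ofReal δ) :=
          (part2_core S f g hδpos).filter_mono hUle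
        filter_upwards [hAε, hcore] with i hai hcorei
        obtain ⟨h1, h2⟩ := hcorei (ν i) (hν i)
        rw [hb_eq i]
        have haP : ∫⁻ x, (f x : ℝ≥0∞) ∂((ν i).bind fun w => empMeasure (S.σ i) w)
            = ∫⁻ x, (f x : ℝ≥0∞) ∂((P i : Measure (Γ → X))) := by rw [← hP i]
        rw [haP] at h1 h2
        obtain ⟨hai1, hai2⟩ := hai
        constructor
        · rw [tsub_le_iff_right]
          calc ∫⁻ x, (f x : ℝ≥0∞) ∂(μ : Measure (Γ → X))
              ≤ ∫⁻ x, (f x : ℝ≥0∞) ∂((P i : Measure (Γ → X))) + ENNReal.ofReal δ :=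
                tsub_le_iff_right.mp hai1
            _ ≤ (∫⁻ x, (f x : ℝ≥0∞)
                  ∂(Measure.map (shiftAct g) ((ν i).bind fun w => empMeasure (S.σ i) w))
                + ENNReal.ofReal δ) + ENNReal.ofReal δ := add_le_add_left h2 _
            _ = ∫⁻ x, (f x : ℝ≥0∞)
                  ∂(Measure.map (shiftAct g) ((ν i).bind fun w => empMeasure (S.σ i) w))
                + ε := by rw [add_assoc, hdd]
        · calc ∫⁻ x, (f x : ℝ≥0∞)
                ∂(Measure.map (shiftAct g) ((ν i).bind fun w => empMeasure (S.σ i) w))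
              ≤ ∫⁻ x, (f x : ℝ≥0∞) ∂((P i : Measure (Γ → X))) + ENNReal.ofReal δ := h1
            _ ≤ (∫⁻ x, (f x : ℝ≥0∞) ∂(μ : Measure (Γ → X)) + ENNReal.ofReal δ)
                + ENNReal.ofReal δ := add_le_add_left hai2 _
            _ = ∫⁻ x, (f x : ℝ≥0∞) ∂(μ : Measure (Γ → X)) + ε := by rw [add_assoc, hdd]
    have hfinal := tendsto_nhds_unique hB hclaim
    calc ∫⁻ x, (f (shiftAct g x) : ℝ≥0∞) ∂(μ : Measure (Γ → X))
        = ∫⁻ x, (fg x : ℝ≥0∞) ∂(μ : Measure (Γ → X)) := rfl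
      _ = ∫⁻ x, (f x : ℝ≥0∞) ∂(μ : Measure (Γ → X)) := hfinal
end

section
/- Let Γ↷X be a continuous action of a countable sofic group on a compact metrizable space and Σ a sofic approximation sequence for Γ. For every ε > 0, the function H_ε : Prob_Γ(X) → {−∞} ∪ [0,+∞) given by H_ε(μ) = h_Σ(ε, Γ↷X, μ) = inf_{δ>0} limsup_{i→∞} P(N_δ(μ*), σ_i, ε, 0) is upper semi-continuous with respect to the weak-* topology. -/
open MeasureTheory Filter Topology Pointwise
open scoped ENNReal NNReal

section CompatMetric

/-- A metric on `α` compatible with its given topology: the balls of `d` form a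
neighborhood basis at every point. -/
structure CompatMetric (α : Type) [TopologicalSpace α] where
  d : α → α → ℝ
  symm : ∀ x y, d x y = d y x
  refl : ∀ x, d x x = 0
  eq_of_d_eq_zero : ∀ x y, d x y = 0 → x = y
  triangle : ∀ x y z, d x z ≤ d x y + d y z
  nhds_eq : ∀ x : α, nhds x = ⨅ (ε : ℝ) (_ : 0 < ε), Filter.principal {y | d x y < ε}

end CompatMetric

/-- The finite-level quantity `P(U, σ_i, ε, f)`: the normalized log of the supremum, over
`ε`-separated collections `E` of microstates in `X^{V_i}` whose empirical distributions lie
in `U`, of `Σ_{φ ∈ E} exp (Σ_v f (φ v))`. -/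
noncomputable def sepPressAt {Γ : Type} [Group Γ] {X : Type} [MetricSpace X]
    [MeasurableSpace X] (S : SoficApprox Γ) (i : ℕ) (ε : ℝ) (f : X → ℝ)
    (U : Set (ProbabilityMeasure (Γ → X))) : EReal :=
  (((S.n i : ℝ)⁻¹ : ℝ) : EReal) * elogE
    (⨆ (E : Finset (Fin (S.n i) → X)) (_ : ∀ φ ∈ E, empDistAt S i φ ∈ U)
        (_ : ∀ φ₁ ∈ E, ∀ φ₂ ∈ E, φ₁ ≠ φ₂ → ∃ v, ε ≤ dist (φ₁ v) (φ₂ v)),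
      ((∑ φ ∈ E, Real.exp (∑ v, f (φ v)) : ℝ) : EReal))


lemma elogE_mono : Monotone elogE := by
  intro x y hxy
  unfold elogE
  by_cases hx : x = ⊤
  · subst hx; simp [top_le_iff.mp hxy]
  by_cases hx0 : x ≤ 0
  · simp only [hx0, if_true, hx, if_false]; exact bot_le
  by_cases hy : y = ⊤
  · simp [hy]
  have hy0 : ¬ y ≤ 0 := fun h => hx0 (hxy.trans h)
  have hxb : x ≠ ⊥ := fun h => hx0 (h ▸ bot_le)
  simp only [hx, hy, hx0, hy0, if_false]
  norm_cast
  have hxpos : 0 < x.toReal := by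
    lift x to ℝ using ⟨hx, hxb⟩
    rw [EReal.toReal_coe]
    exact_mod_cast lt_of_not_ge hx0
  exact Real.log_le_log hxpos (EReal.toReal_le_toReal hxy hxb hy)

lemma sepPressAt_mono {Γ : Type} [Group Γ] {X : Type} [MetricSpace X]
    [MeasurableSpace X] (S : SoficApprox Γ) (i : ℕ) (ε : ℝ) (f : X → ℝ)
    {U U' : Set (ProbabilityMeasure (Γ → X))} (hUU' : U ⊆ U') :
    sepPressAt S i ε f U ≤ sepPressAt S i ε f U' := by
  unfold sepPressAt
  refine mul_le_mul_of_nonneg_left (elogE_mono ?_) ?_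
  · refine iSup_mono fun E => iSup_le fun hU => le_iSup_of_le (fun φ hφ => hUU' (hU φ hφ)) le_rfl
  · exact_mod_cast (EReal.coe_nonneg.2 (by positivity) :
      (0 : EReal) ≤ ((S.n i : ℝ)⁻¹ : ℝ))

/-- **Upper semicontinuity of `H_ε`.**
Let `Γ ↷ X` be a continuous action of a countable sofic group on a compact metrizable space
and `S` a sofic approximation sequence. For every `ε > 0` the function
`H_ε(μ) = inf_{δ>0} limsup_i P(N_δ(μ*), σ_i, ε, 0)` is upper semicontinuous on the set of
`Γ`-invariant Borel probability measures, with respect to the weak-* topology. -/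
theorem entropy_eps_upperSemicontinuous
    {Γ : Type} [Group Γ] [Countable Γ]
    {X : Type} [MetricSpace X] [CompactSpace X] [SecondCountableTopology X]
    [MeasurableSpace X] [BorelSpace X] [MulAction Γ X]
    (hact : ∀ g : Γ, Continuous (fun x : X => g • x))
    (S : SoficApprox Γ)
    (dP : CompatMetric (ProbabilityMeasure (Γ → X)))
    (ε : ℝ) (hε : 0 < ε) :
    UpperSemicontinuousOn
      (fun μ : ProbabilityMeasure X =>
        ⨅ (δ : ℝ) (_ : 0 < δ),
          Filter.limsup (fun i => sepPressAt S i ε (fun _ => (0 : ℝ))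
            {ν : ProbabilityMeasure (Γ → X) |
              dP.d ν (μ.map (f := fun (x : X) (g : Γ) => g⁻¹ • x)
                (measurable_pi_lambda _ (fun g => (hact g⁻¹).measurable)).aemeasurable) ≤ δ})
            Filter.atTop)
      {μ : ProbabilityMeasure X |
        ∀ g : Γ, Measure.map (fun x : X => g • x) μ.toMeasure = μ.toMeasure} := by
  intro μ₀ _ c hc
  set orb : ProbabilityMeasure X → ProbabilityMeasure (Γ → X) :=
    fun μ => μ.map (f := fun (x : X) (g : Γ) => g⁻¹ • x)
      (measurable_pi_lambda _ (fun g => (hact g⁻¹).measurable)).aemeasurable with horb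
  obtain ⟨δ, hδ, hlt⟩ : ∃ δ : ℝ, 0 < δ ∧
      Filter.limsup (fun i => sepPressAt S i ε (fun _ => (0 : ℝ))
        {ν : ProbabilityMeasure (Γ → X) | dP.d ν (orb μ₀) ≤ δ}) Filter.atTop < c := by
    rw [iInf_lt_iff] at hc
    obtain ⟨δ, hδc⟩ := hc
    rw [iInf_lt_iff] at hδc
    obtain ⟨hδ, h⟩ := hδc
    exact ⟨δ, hδ, h⟩
  have hcont : Continuous orb :=
    MeasureTheory.ProbabilityMeasure.continuous_map (continuous_pi fun g => hact g⁻¹)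
  have hball : {ν | dP.d (orb μ₀) ν < δ/2} ∈ 𝓝 (orb μ₀) := by
    rw [dP.nhds_eq]
    exact mem_iInf_of_mem (δ/2) (mem_iInf_of_mem (by positivity) (Filter.mem_principal_self _))
  have hW : {μ | dP.d (orb μ₀) (orb μ) < δ/2} ∈ 𝓝 μ₀ :=
    hcont.continuousAt.preimage_mem_nhds hball
  filter_upwards [mem_nhdsWithin_of_mem_nhds hW] with μ hμ
  have hsub : {ν : ProbabilityMeasure (Γ → X) | dP.d ν (orb μ) ≤ δ/2}
      ⊆ {ν : ProbabilityMeasure (Γ → X) | dP.d ν (orb μ₀) ≤ δ} := by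
    intro ν hν
    have htri := dP.triangle ν (orb μ) (orb μ₀)
    have hsymm := dP.symm (orb μ) (orb μ₀)
    simp only [Set.mem_setOf_eq] at hν ⊢
    have hμ' : dP.d (orb μ₀) (orb μ) < δ/2 := hμ
    linarith
  calc (⨅ (δ' : ℝ) (_ : 0 < δ'),
        Filter.limsup (fun i => sepPressAt S i ε (fun _ => (0 : ℝ))
          {ν : ProbabilityMeasure (Γ → X) | dP.d ν (orb μ) ≤ δ'}) Filter.atTop)
      ≤ Filter.limsup (fun i => sepPressAt S i ε (fun _ => (0 : ℝ))
          {ν : ProbabilityMeasure (Γ → X) | dP.d ν (orb μ) ≤ δ/2}) Filter.atTop :=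
        iInf₂_le (δ/2) (by positivity)
    _ ≤ Filter.limsup (fun i => sepPressAt S i ε (fun _ => (0 : ℝ))
          {ν : ProbabilityMeasure (Γ → X) | dP.d ν (orb μ₀) ≤ δ}) Filter.atTop :=
        Filter.limsup_le_limsup (Filter.Eventually.of_forall fun i =>
          sepPressAt_mono S i ε _ hsub)
    _ < c := hlt
end

section
/- Let V be a topological vector space admitting a continuous norm ‖·‖, and let V̄ denote the completion of V with respect to ‖·‖. Let f : V̄ → ℝ be a continuous convex function and ψ : V → V̄ a continuous function. Suppose there exists a dense subset A ⊆ V such that for every v̄ ∈ A there exists a tangent functional w̄ ∈ V̄* of f at v̄ with dual norm at most 1 satisfying w̄(ψ(v̄)) ≥ 0. Then for every v ∈ V and every tangent functional w ∈ V̄* of f at v, one has w(ψ(v)) ≥ 0. -/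
/-- `w` is a tangent functional (subgradient) of `f : W → ℝ` at the point `v ∈ W`. -/
def IsTangentFunctionalAt {W : Type} [NormedAddCommGroup W] [NormedSpace ℝ W]
    (f : W → ℝ) (w : W →L[ℝ] ℝ) (v : W) : Prop :=
  ∀ u : W, w (u - v) ≤ f u - f v

/-- **Tangent functionals and dense subsets (Proposition 5.1).**
Let `V` be a topological vector space admitting a continuous norm, with completion `V̄`
(modelled by a Banach space `W` together with a dense isometric linear embedding
`j : V → W`). Let `f : V̄ → ℝ` be continuous and convex and `ψ : V → V̄` continuous.
If there is a dense set `A ⊆ V` such that every `v̄ ∈ A` admits a tangent functional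
`w̄` of `f` at `v̄` of dual norm at most `1` with `w̄(ψ(v̄)) ≥ 0`, then for every `v ∈ V`,
every tangent functional `w` of `f` at `v` satisfies `w(ψ(v)) ≥ 0`. -/
theorem tangent_nonneg_of_dense
    {V : Type} [AddCommGroup V] [Module ℝ V] [TopologicalSpace V]
    [IsTopologicalAddGroup V] [ContinuousSMul ℝ V]
    {W : Type} [NormedAddCommGroup W] [NormedSpace ℝ W] [CompleteSpace W]
    (j : V →ₗ[ℝ] W) (hjdense : DenseRange j)
    (N : V → ℝ) (hNnorm : ∀ v : V, N v = ‖j v‖) (hNcont : Continuous N)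
    (hNdef : ∀ v : V, N v = 0 → v = 0)
    (f : W → ℝ) (hfcont : Continuous f) (hfconv : ConvexOn ℝ Set.univ f)
    (ψ : V → W) (hψcont : Continuous ψ)
    (A : Set V) (hA : Dense A)
    (hAtangent : ∀ v ∈ A, ∃ w : W →L[ℝ] ℝ, ‖w‖ ≤ 1 ∧
      IsTangentFunctionalAt f w (j v) ∧ 0 ≤ w (ψ v)) :
    ∀ v : V, ∀ w : W →L[ℝ] ℝ, IsTangentFunctionalAt f w (j v) → 0 ≤ w (ψ v) := by
  -- `j` is continuous
  have hN0 : N 0 = 0 := by rw [hNnorm]; simp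
  have hjcont : Continuous fun v : V => j v := by
    rw [continuous_iff_continuousAt]
    intro v₀
    rw [ContinuousAt, tendsto_iff_norm_sub_tendsto_zero]
    have heq : (fun x : V => ‖j x - j v₀‖) = fun x => N (x - v₀) := by
      funext x; rw [hNnorm, map_sub]
    rw [heq]
    have hc : Continuous fun x : V => N (x - v₀) :=
      hNcont.comp (continuous_id.sub continuous_const)
    have := hc.tendsto v₀
    simpa [hN0] using this
  -- `j '' A` is dense in `W`
  have hjA : Dense (j '' A) := hjdense.dense_image hjcont hA
  -- `f` is 1-Lipschitz (in the useful one-sided form)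
  have hlip : ∀ x y : W, f x - ‖y - x‖ ≤ f y := by
    intro x y
    have hcl : IsClosed {x : W | f x - ‖y - x‖ ≤ f y} :=
      isClosed_le (hfcont.sub (continuous_const.sub continuous_id).norm) continuous_const
    have hAsub : j '' A ⊆ {x : W | f x - ‖y - x‖ ≤ f y} := by
      rintro _ ⟨a, ha, rfl⟩
      obtain ⟨w, hw1, hw2, _⟩ := hAtangent a ha
      have ht := hw2 y
      have habs : |w (y - j a)| ≤ ‖y - j a‖ := by
        calc |w (y - j a)| = ‖w (y - j a)‖ := rfl
          _ ≤ ‖w‖ * ‖y - j a‖ := w.le_opNorm _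
          _ ≤ 1 * ‖y - j a‖ := by
              apply mul_le_mul_of_nonneg_right hw1 (norm_nonneg _)
          _ = ‖y - j a‖ := one_mul _
      have hb : -‖y - j a‖ ≤ w (y - j a) := by
        have := (abs_le.mp habs).1; linarith
      simp only [Set.mem_setOf_eq]
      linarith
    have hcsub : closure (j '' A) ⊆ {x : W | f x - ‖y - x‖ ≤ f y} :=
      hcl.closure_subset_iff.2 hAsub
    have hx : x ∈ closure (j '' A) := by rw [hjA.closure_eq]; trivial
    exact hcsub hx
  -- stability inequality, extended from `A` to all of `V` by density
  have hstab : ∀ t : ℝ, 0 ≤ t → ∀ v : V, f (j v) ≤ f (j v + t • ψ v) := by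
    intro t ht
    have hcl : IsClosed {v : V | f (j v) ≤ f (j v + t • ψ v)} :=
      isClosed_le (hfcont.comp hjcont)
        (hfcont.comp (hjcont.add (hψcont.const_smul t)))
    have hAsub : A ⊆ {v : V | f (j v) ≤ f (j v + t • ψ v)} := by
      intro a ha
      obtain ⟨w, _, hw2, hw3⟩ := hAtangent a ha
      have ht2 := hw2 (j a + t • ψ a)
      have he : w (j a + t • ψ a - j a) = t * w (ψ a) := by
        rw [add_sub_cancel_left, map_smul]; rfl
      rw [he] at ht2
      have : 0 ≤ t * w (ψ a) := mul_nonneg ht hw3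
      simp only [Set.mem_setOf_eq]
      linarith
    have hcsub : closure A ⊆ {v : V | f (j v) ≤ f (j v + t • ψ v)} :=
      hcl.closure_subset_iff.2 hAsub
    intro v
    exact hcsub (by rw [hA.closure_eq]; trivial)
  -- main argument
  intro v w hw
  by_contra hneg
  push_neg at hneg
  set ε : ℝ := -w (ψ v) / (2 * (1 + ‖w‖)) with hεdef
  have hwn : (0:ℝ) < 1 + ‖w‖ := by positivity
  have hεpos : 0 < ε := by
    apply div_pos (by linarith) (by linarith)
  obtain ⟨z, hz⟩ := hjdense.exists_dist_lt (ψ v) hεpos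
  rw [dist_comm, dist_eq_norm] at hz
  -- key inequality for each s > 0
  have hkey : ∀ s : ℝ, 0 < s → -(w (j z)) ≤ ‖ψ (v - s • z) - j z‖ := by
    intro s hs
    have h1 : f (j v) + w (j (v - s • z) - j v) ≤ f (j (v - s • z)) := by
      have := hw (j (v - s • z)); linarith
    have h2 : f (j (v - s • z)) ≤ f (j (v - s • z) + s • ψ (v - s • z)) :=
      hstab s hs.le _
    have h3 : f (j (v - s • z) + s • ψ (v - s • z))
        - ‖j v - (j (v - s • z) + s • ψ (v - s • z))‖ ≤ f (j v) :=
      hlip _ _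
    have e1 : j (v - s • z) - j v = -(s • j z) := by
      rw [map_sub, map_smul]; abel
    have e2 : j v - (j (v - s • z) + s • ψ (v - s • z)) = s • (j z - ψ (v - s • z)) := by
      rw [map_sub, map_smul, smul_sub]; abel
    rw [e1] at h1
    rw [e2] at h3
    have ew : w (-(s • j z)) = -(s * w (j z)) := by
      rw [map_neg, map_smul]; rfl
    rw [ew] at h1
    have hn : ‖s • (j z - ψ (v - s • z))‖ = s * ‖j z - ψ (v - s • z)‖ := by
      rw [norm_smul, Real.norm_of_nonneg hs.le]
    rw [hn] at h3
    have hcomb : -(s * w (j z)) ≤ s * ‖j z - ψ (v - s • z)‖ := by linarith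
    have hdiv : -(w (j z)) ≤ ‖j z - ψ (v - s • z)‖ := by
      have := mul_le_mul_of_nonneg_left hcomb (le_of_lt (inv_pos.mpr hs))
      rw [mul_neg, inv_mul_cancel_left₀ (ne_of_gt hs), inv_mul_cancel_left₀ (ne_of_gt hs)] at this
      linarith
    rwa [norm_sub_rev] at hdiv
  -- take the limit s → 0⁺
  have hlim : Filter.Tendsto (fun s : ℝ => ‖ψ (v - s • z) - j z‖)
      (nhdsWithin 0 (Set.Ioi 0)) (nhds ‖ψ v - j z‖) := by
    have hc : Continuous fun s : ℝ => ‖ψ (v - s • z) - j z‖ := by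
      exact ((hψcont.comp (continuous_const.sub
        ((continuous_id).smul continuous_const))).sub continuous_const).norm
    have := hc.tendsto 0
    simp only [zero_smul, sub_zero] at this
    exact this.mono_left nhdsWithin_le_nhds
  have hfin : -(w (j z)) ≤ ‖ψ v - j z‖ :=
    ge_of_tendsto hlim (eventually_nhdsWithin_of_forall (fun s hs => hkey s hs))
  -- conclude
  have habs : |w (ψ v) - w (j z)| ≤ ‖w‖ * ‖ψ v - j z‖ := by
    have : w (ψ v) - w (j z) = w (ψ v - j z) := by rw [map_sub]
    rw [this]
    calc |w (ψ v - j z)| = ‖w (ψ v - j z)‖ := rfl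
      _ ≤ ‖w‖ * ‖ψ v - j z‖ := w.le_opNorm _
  have h1 := (abs_le.mp habs).1
  have hεeq : (1 + ‖w‖) * ε = -w (ψ v) / 2 := by
    rw [hεdef]; field_simp
  have hrev : ‖ψ v - j z‖ = ‖j z - ψ v‖ := norm_sub_rev _ _
  have hm : (1 + ‖w‖) * ‖j z - ψ v‖ < (1 + ‖w‖) * ε :=
    mul_lt_mul_of_pos_left hz hwn
  nlinarith [norm_nonneg w, norm_nonneg (ψ v - j z)]
end

section
/- Let Γ be a countable group, A a finite set, X ⊆ A^Γ a subshift, and let x ∈ A^Γ be non self-overlapping. Then for every finite F₁ ⊆ Γ and every y ∈ A^Γ with (x,y) ∈ T_{F₁}(X), there exists a finite F₂ ⊆ Γ with F₁ ⊆ F₂ such that {x,y} has trivial F₁-overlaps within F₂. -/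
open MeasureTheory Filter Topology Pointwise
open scoped ENNReal NNReal

section Overlaps

variable {Γ : Type} [Group Γ] [DecidableEq Γ]

/-- `X₀ ⊆ A^Γ` has trivial `F₁`-overlaps within `F₂`:
`(g y')|_{F₂ ∩ g F₂} ≠ x'|_{F₂ ∩ g F₂}` for every `g ∈ F₂ F₁⁻¹ ∖ {1}` and `x', y' ∈ X₀`. -/
def TrivialOverlaps {A : Type} (X₀ : Set (Γ → A)) (F₁ F₂ : Finset Γ) : Prop :=
  ∀ g : Γ, (∃ a ∈ F₂, ∃ b ∈ F₁, g = a * b⁻¹) → g ≠ 1 →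
    ∀ x' ∈ X₀, ∀ y' ∈ X₀, ∃ h : Γ, h ∈ F₂ ∧ g⁻¹ * h ∈ F₂ ∧ shiftAct g y' h ≠ x' h

/-- `x` is `(F₁, F₂)`-self-overlapping:
`(g x)|_{(F₂∖F₁) ∩ g(F₂∖F₁)} = x|_{(F₂∖F₁) ∩ g(F₂∖F₁)}` for some `g ∈ F₂F₁⁻¹ ∖ {1}`. -/
def SelfOverlapping {A : Type} (x : Γ → A) (F₁ F₂ : Finset Γ) : Prop :=
  ∃ g : Γ, (∃ a ∈ F₂, ∃ b ∈ F₁, g = a * b⁻¹) ∧ g ≠ 1 ∧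
    ∀ h : Γ, h ∈ F₂ \ F₁ → g⁻¹ * h ∈ F₂ \ F₁ → shiftAct g x h = x h

/-- `x` is non self-overlapping: for every finite `F₁ ⊆ Γ` there is a finite `F₂ ⊇ F₁` such
that `x` is not `(F₁, F₂)`-self-overlapping. -/
def NonSelfOverlapping {A : Type} (x : Γ → A) : Prop :=
  ∀ F₁ : Finset Γ, ∃ F₂ : Finset Γ, F₁ ⊆ F₂ ∧ ¬ SelfOverlapping x F₁ F₂

end Overlaps

/-- **Non self-overlapping configurations have trivial overlaps with their asymptotic
companions (Lemma 4.4).**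
Let `X ⊆ A^Γ` be a subshift and let `x ∈ A^Γ` be non self-overlapping. Then for every
finite `F₁ ⊆ Γ` and every `y` with `(x, y) ∈ T_{F₁}(X)` there exists a finite `F₂ ⊇ F₁`
such that `{x, y}` has trivial `F₁`-overlaps within `F₂`. -/
theorem nonSelfOverlapping_trivialOverlaps
    {Γ : Type} [Group Γ] [Countable Γ] [DecidableEq Γ]
    {A : Type} [Fintype A] [TopologicalSpace A] [DiscreteTopology A]
    (X : Set (Γ → A)) (hX : IsSubshift X)
    (x : Γ → A) (hx : NonSelfOverlapping x)
    (F₁ : Finset Γ) (y : Γ → A) (hxy : (x, y) ∈ asympRelF X F₁) :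
    ∃ F₂ : Finset Γ, F₁ ⊆ F₂ ∧ TrivialOverlaps {x, y} F₁ F₂ := by
  obtain ⟨F₂, hsub, hnso⟩ := hx F₁
  refine ⟨F₂, hsub, ?_⟩
  intro g hg hg1 x' hx' y' hy'
  unfold SelfOverlapping at hnso
  push_neg at hnso
  obtain ⟨h, hh, hgh, hne⟩ := hnso g hg hg1
  obtain ⟨hhF₂, hhF₁⟩ := Finset.mem_sdiff.mp hh
  obtain ⟨hghF₂, hghF₁⟩ := Finset.mem_sdiff.mp hgh
  refine ⟨h, hhF₂, hghF₂, ?_⟩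
  have hagree := hxy.2.2
  have hx'h : x' h = x h := by
    rcases hx' with rfl | hx' <;> simp_all
  have hy'h : y' (g⁻¹ * h) = x (g⁻¹ * h) := by
    rcases hy' with rfl | hy' <;> simp_all
  simpa [shiftAct, hx'h, hy'h] using hne
end

section
/- Let Γ be a countably infinite group and let μ be the uniform Bernoulli measure on {0,1}^Γ (the product over Γ of the uniform probability measure on {0,1}). Then there exists a Borel subset X₀ ⊆ {0,1}^Γ with μ(X₀) = 1 such that every x ∈ X₀ is non self-overlapping. -/
open MeasureTheory Filter Topology Pointwise
open scoped ENNReal NNReal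

section AuxNSO

open MeasureTheory

lemma exists_weakSidon {Γ : Type} [Group Γ] [Infinite Γ] [DecidableEq Γ] (m : ℕ) :
    ∃ D : Finset Γ, D.card = m ∧
      ∀ w : Γ, ((D ×ˢ D).filter fun p => p.1 ≠ p.2 ∧ p.1 * p.2⁻¹ = w).card ≤ 2 := by
  classical
  induction m with
  | zero => exact ⟨∅, rfl, by simp⟩
  | succ r ih =>
    obtain ⟨D, hcard, hQ⟩ := ih
    set Q : Finset Γ := (D ×ˢ D).image (fun p => p.1 * p.2⁻¹) with hQdef
    set B : Finset Γ := D ∪ (Q ×ˢ D).image (fun p => p.1 * p.2)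
        ∪ (Q ×ˢ D).image (fun p => p.1⁻¹ * p.2) with hBdef
    obtain ⟨x, hx⟩ := Infinite.exists_notMem_finset B
    have hxD : x ∉ D := fun h => hx (by simp [hBdef, h])
    have hxQmul : ∀ w ∈ Q, ∀ d ∈ D, x ≠ w * d := by
      intro w hw d hd h
      apply hx
      simp only [hBdef, Finset.mem_union]
      exact Or.inl (Or.inr (Finset.mem_image.mpr ⟨(w, d), Finset.mem_product.mpr ⟨hw, hd⟩, h.symm⟩))
    have hxQinv : ∀ w ∈ Q, ∀ d ∈ D, x ≠ w⁻¹ * d := by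
      intro w hw d hd h
      apply hx
      simp only [hBdef, Finset.mem_union]
      exact Or.inr (Finset.mem_image.mpr ⟨(w, d), Finset.mem_product.mpr ⟨hw, hd⟩, h.symm⟩)
    refine ⟨insert x D, by rw [Finset.card_insert_of_notMem hxD, hcard], ?_⟩
    intro w
    by_cases hw : w ∈ Q
    · refine le_trans (Finset.card_le_card ?_) (hQ w)
      intro p hp
      simp only [Finset.mem_filter, Finset.mem_product, Finset.mem_insert] at hp ⊢
      obtain ⟨⟨h1, h2⟩, hne, heq⟩ := hp
      rcases h1 with h1 | h1
      · rcases h2 with h2 | h2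
        · exact absurd (h1.trans h2.symm) hne
        · exfalso
          apply hxQmul w hw p.2 h2
          rw [h1] at heq
          rw [← heq]; group
      · rcases h2 with h2 | h2
        · exfalso
          apply hxQinv w hw p.1 h1
          rw [h2] at heq
          rw [← heq]; group
        · exact ⟨⟨h1, h2⟩, hne, heq⟩
    · refine le_trans (Finset.card_le_card (t := ({(x, w⁻¹ * x), (w * x, x)} : Finset (Γ × Γ))) ?_) ?_
      · intro p hp
        simp only [Finset.mem_filter, Finset.mem_product, Finset.mem_insert] at hp ⊢
        obtain ⟨⟨h1, h2⟩, hne, heq⟩ := hp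
        rcases h1 with h1 | h1
        · left
          have : p.2 = w⁻¹ * x := by rw [h1] at heq; rw [← heq]; group
          rw [Prod.ext_iff]; exact ⟨h1, this⟩
        · rcases h2 with h2 | h2
          · right
            have : p.1 = w * x := by rw [h2] at heq; rw [← heq]; group
            simp [Prod.ext_iff, this, h2]
          · exact absurd (Finset.mem_image.mpr ⟨p, Finset.mem_product.mpr ⟨h1, h2⟩, heq⟩) hw
      · exact le_trans (Finset.card_insert_le _ _) (by simp)


lemma pair_event_bound {Γ : Type} [DecidableEq Γ]
    (μ : Measure (Γ → Bool))
    (hB : ∀ (F : Finset Γ) (x : Γ → Bool),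
      μ {y : Γ → Bool | ∀ g ∈ F, y g = x g} = (2 : ENNReal)⁻¹ ^ F.card)
    (m : ℕ) (u v : Fin m → Γ) (huv : ∀ i j, u i ≠ v j)
    (hu : Function.Injective u) (hv : Function.Injective v) :
    μ {x : Γ → Bool | ∀ i, x (u i) = x (v i)} ≤ 2⁻¹ ^ m := by
  classical
  set S : Finset Γ := (Finset.univ.image u) ∪ (Finset.univ.image v) with hSdef
  have hScard : S.card = 2 * m := by
    rw [hSdef, Finset.card_union_of_disjoint, Finset.card_image_of_injective _ hu,
      Finset.card_image_of_injective _ hv, Finset.card_univ, Fintype.card_fin]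
    · ring
    · rw [Finset.disjoint_left]
      intro a ha hb
      obtain ⟨i, _, hi⟩ := Finset.mem_image.mp ha
      obtain ⟨j, _, hj⟩ := Finset.mem_image.mp hb
      exact huv i j (hi.trans hj.symm)
  set pat : (Fin m → Bool) → Γ → Bool := fun c g =>
    if h : ∃ i, u i = g then c h.choose
    else if h' : ∃ i, v i = g then c h'.choose else false with hpat
  have hsub : {x : Γ → Bool | ∀ i, x (u i) = x (v i)} ⊆
      ⋃ c : Fin m → Bool, {y : Γ → Bool | ∀ g ∈ S, y g = pat c g} := by
    intro x hx
    refine Set.mem_iUnion.mpr ⟨fun i => x (u i), fun g hg => ?_⟩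
    by_cases h : ∃ i, u i = g
    · rw [hpat]; simp only [dif_pos h]
      exact (congrArg x h.choose_spec).symm
    · have h' : ∃ i, v i = g := by
        rcases Finset.mem_union.mp hg with h1 | h1
        · obtain ⟨i, _, hi⟩ := Finset.mem_image.mp h1
          exact absurd ⟨i, hi⟩ h
        · obtain ⟨j, _, hj⟩ := Finset.mem_image.mp h1
          exact ⟨j, hj⟩
      rw [hpat]; simp only [dif_neg h, dif_pos h']
      rw [hx h'.choose]
      exact (congrArg x h'.choose_spec).symm
  calc μ {x : Γ → Bool | ∀ i, x (u i) = x (v i)}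
      ≤ ∑' c : Fin m → Bool, μ {y : Γ → Bool | ∀ g ∈ S, y g = pat c g} :=
        (measure_mono hsub).trans (measure_iUnion_le _)
    _ = ∑ c : Fin m → Bool, ((2 : ENNReal)⁻¹ ^ S.card) := by
        rw [tsum_fintype]; exact Finset.sum_congr rfl fun c _ => hB S (pat c)
    _ = (2 ^ m : ENNReal) * 2⁻¹ ^ (2 * m) := by
        rw [Finset.sum_const, hScard, Finset.card_univ, Fintype.card_fun,
          Fintype.card_bool, Fintype.card_fin, nsmul_eq_mul]
        push_cast
        ring
    _ = 2⁻¹ ^ m := by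
        have h1 : (2 : ENNReal) ^ m * 2⁻¹ ^ m = 1 := by
          rw [← ENNReal.inv_pow]
          exact ENNReal.mul_inv_cancel (by positivity) (by simp)
        rw [two_mul, pow_add, ← mul_assoc, h1, one_mul]


lemma sq_le_two_pow : ∀ j : ℕ, 20 ≤ j → (4 * j + 1) ^ 2 ≤ 2 ^ j := by
  intro j hj
  induction j, hj using Nat.le_induction with
  | base => norm_num
  | succ j hj ih =>
    have h1 : (4 * (j + 1) + 1) ^ 2 ≤ 2 * (4 * j + 1) ^ 2 := by nlinarith
    calc (4 * (j + 1) + 1) ^ 2 ≤ 2 * (4 * j + 1) ^ 2 := h1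
      _ ≤ 2 * 2 ^ j := by omega
      _ = 2 ^ (j + 1) := by ring



lemma key_bound {Γ : Type} [Group Γ] [Infinite Γ] [DecidableEq Γ]
    (μ : Measure (Γ → Bool))
    (hB : ∀ (F : Finset Γ) (x : Γ → Bool),
      μ {y : Γ → Bool | ∀ g ∈ F, y g = x g} = (2 : ENNReal)⁻¹ ^ F.card)
    (F₁ : Finset Γ) (n : ℕ) :
    ∃ F₂ : Finset Γ, F₁ ⊆ F₂ ∧
      μ {x : Γ → Bool | SelfOverlapping x F₁ F₂} ≤ 2⁻¹ ^ n := by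
  classical
  set k := F₁.card with hk
  set r := 2 * k + 4 with hr
  set K := k ^ 2 with hK
  set j := K + n + r + 20 with hj
  set m := 2 * j with hm
  obtain ⟨D, hDcard, hSidon⟩ := exists_weakSidon (Γ := Γ) m
  set E : Finset Γ := D ∪ D.image (·⁻¹) ∪ {1} with hEdef
  have h1E : (1 : Γ) ∈ E := by simp [hEdef]
  have hDE : ∀ d ∈ D, d ∈ E := fun d hd => by simp [hEdef, hd]
  have hEinv : ∀ e ∈ E, e⁻¹ ∈ E := by
    intro e he
    simp only [hEdef, Finset.mem_union, Finset.mem_image, Finset.mem_singleton] at he ⊢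
    rcases he with (he | ⟨d, hd, hde⟩) | he
    · exact Or.inl (Or.inr ⟨e, he, rfl⟩)
    · exact Or.inl (Or.inl (by rw [← hde]; simpa using hd))
    · exact Or.inr (by rw [he]; exact inv_one)
  have hEcard : E.card ≤ 2 * m + 1 := by
    have h1 : E.card ≤ (D ∪ D.image (·⁻¹)).card + 1 := by
      rw [hEdef]
      simpa using Finset.card_union_le (D ∪ D.image (·⁻¹)) ({1} : Finset Γ)
    have h2 := Finset.card_union_le D (D.image (·⁻¹))
    have h3 := Finset.card_image_le (s := D) (f := (·⁻¹))
    omega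
  set U : Finset Γ := (E ×ˢ E).image (fun p => p.1 * p.2) with hUdef
  have hU : ∀ e₁ ∈ E, ∀ e₂ ∈ E, e₁ * e₂ ∈ U := fun e₁ h1 e₂ h2 =>
    Finset.mem_image.mpr ⟨(e₁, e₂), Finset.mem_product.mpr ⟨h1, h2⟩, rfl⟩
  have h1U : (1 : Γ) ∈ U := by simpa using hU 1 h1E 1 h1E
  have hUcard : U.card ≤ (2 * m + 1) ^ 2 := by
    calc U.card ≤ (E ×ˢ E).card := Finset.card_image_le
      _ = E.card * E.card := Finset.card_product _ _
      _ ≤ (2 * m + 1) ^ 2 := by rw [sq]; exact Nat.mul_le_mul hEcard hEcard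
  set F₂ : Finset Γ := (F₁ ×ˢ U).image (fun p => p.1 * p.2) with hF2def
  have hF2 : ∀ f ∈ F₁, ∀ u ∈ U, f * u ∈ F₂ := fun f hf u hu =>
    Finset.mem_image.mpr ⟨(f, u), Finset.mem_product.mpr ⟨hf, hu⟩, rfl⟩
  have hsub12 : F₁ ⊆ F₂ := fun f hf => by simpa using hF2 f hf 1 h1U
  have hF2card : F₂.card ≤ k * (2 * m + 1) ^ 2 := by
    calc F₂.card ≤ (F₁ ×ˢ U).card := Finset.card_image_le
      _ = k * U.card := by rw [Finset.card_product]
      _ ≤ k * (2 * m + 1) ^ 2 := Nat.mul_le_mul_left _ hUcard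
  refine ⟨F₂, hsub12, ?_⟩
  set bad : Γ × Γ → Set (Γ → Bool) := fun p =>
    {x | p.1 * p.2⁻¹ ≠ 1 ∧ ∀ h : Γ, h ∈ F₂ \ F₁ → (p.1 * p.2⁻¹)⁻¹ * h ∈ F₂ \ F₁ →
      x ((p.1 * p.2⁻¹)⁻¹ * h) = x h} with hbaddef
  have hcover : {x : Γ → Bool | SelfOverlapping x F₁ F₂} ⊆
      ⋃ p ∈ (F₂ ×ˢ F₁ : Finset (Γ × Γ)), bad p := by
    intro x hx
    obtain ⟨g, ⟨a, ha, b, hb, hab⟩, hg1, hfit⟩ := hx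
    subst hab
    exact Set.mem_biUnion (Finset.mem_product.mpr ⟨ha, hb⟩ : (a, b) ∈ F₂ ×ˢ F₁)
      ⟨hg1, fun h h1 h2 => hfit h h1 h2⟩
  have hpair : ∀ p ∈ (F₂ ×ˢ F₁ : Finset (Γ × Γ)), μ (bad p) ≤ 2⁻¹ ^ (m - r) := by
    rintro ⟨a, b⟩ hp
    obtain ⟨ha, hb⟩ := Finset.mem_product.mp hp
    by_cases hg1 : a * b⁻¹ = 1
    · have hempty : bad (a, b) = ∅ := by
        ext x; simp [hbaddef, hg1]
      rw [hempty]; simp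
    · obtain ⟨⟨f, u⟩, hfu, hafu⟩ := Finset.mem_image.mp ha
      obtain ⟨hf, hu⟩ := Finset.mem_product.mp hfu
      obtain ⟨⟨e₁, e₂⟩, he, hue⟩ := Finset.mem_image.mp hu
      obtain ⟨he₁, he₂⟩ := Finset.mem_product.mp he
      simp only at hafu hue
      set w₀ : Γ := e₁⁻¹ * f⁻¹ * b * e₂⁻¹ with hw₀
      have hw₀ne : w₀ ≠ 1 := by
        intro hcon
        apply hg1
        have h' : f * e₁ * w₀ * e₂ = b := by rw [hw₀]; group
        rw [hcon] at h'
        rw [← h', ← hafu, ← hue]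
        group
      set D' : Finset Γ := D.filter (fun d => f * (e₁ * d) ∉ F₁ ∧ b * (e₂⁻¹ * d) ∉ F₁ ∧
        ∀ d' ∈ D, d' ≠ d → d * d'⁻¹ ≠ w₀ ∧ d' * d⁻¹ ≠ w₀) with hD'def
    -- cardinality of D'
      have hD'sub : D' ⊆ D := Finset.filter_subset _ _
      have hA1 : (D.filter (fun d => f * (e₁ * d) ∈ F₁)).card ≤ k := by
        apply Finset.card_le_card_of_injOn (fun d => f * (e₁ * d))
        · intro d hd; exact (Finset.mem_filter.mp hd).2
        · intro d1 _ d2 _ hdd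
          simpa using hdd
      have hA2 : (D.filter (fun d => b * (e₂⁻¹ * d) ∈ F₁)).card ≤ k := by
        apply Finset.card_le_card_of_injOn (fun d => b * (e₂⁻¹ * d))
        · intro d hd; exact (Finset.mem_filter.mp hd).2
        · intro d1 _ d2 _ hdd
          simpa using hdd
      have hA3 : (D.filter (fun d => ∃ d' ∈ D, d' ≠ d ∧ (d * d'⁻¹ = w₀ ∨ d' * d⁻¹ = w₀))).card ≤ 4 := by
        set Sol := (D ×ˢ D).filter (fun p => p.1 ≠ p.2 ∧ p.1 * p.2⁻¹ = w₀) with hSoldef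
        have hsub3 : D.filter (fun d => ∃ d' ∈ D, d' ≠ d ∧ (d * d'⁻¹ = w₀ ∨ d' * d⁻¹ = w₀)) ⊆
            Sol.image Prod.fst ∪ Sol.image Prod.snd := by
          intro d hd
          obtain ⟨hdD, d', hd'D, hne, hcase⟩ := Finset.mem_filter.mp hd
          rcases hcase with hcase | hcase
          · apply Finset.mem_union_left
            exact Finset.mem_image.mpr ⟨(d, d'), Finset.mem_filter.mpr
              ⟨Finset.mem_product.mpr ⟨hdD, hd'D⟩, Ne.symm hne, hcase⟩, rfl⟩
          · apply Finset.mem_union_right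
            exact Finset.mem_image.mpr ⟨(d', d), Finset.mem_filter.mpr
              ⟨Finset.mem_product.mpr ⟨hd'D, hdD⟩, hne, hcase⟩, rfl⟩
        calc (D.filter (fun d => ∃ d' ∈ D, d' ≠ d ∧ (d * d'⁻¹ = w₀ ∨ d' * d⁻¹ = w₀))).card
            ≤ (Sol.image Prod.fst ∪ Sol.image Prod.snd).card := Finset.card_le_card hsub3
          _ ≤ (Sol.image Prod.fst).card + (Sol.image Prod.snd).card := Finset.card_union_le _ _
          _ ≤ Sol.card + Sol.card := Nat.add_le_add Finset.card_image_le Finset.card_image_le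
          _ ≤ 4 := by
              have h2 := hSidon w₀
              rw [← hSoldef] at h2
              omega
      have hDD' : (D \ D').card ≤ 2 * k + 4 := by
        have hsubD : D \ D' ⊆ (D.filter fun d => f * (e₁ * d) ∈ F₁) ∪
            (D.filter fun d => b * (e₂⁻¹ * d) ∈ F₁) ∪
            (D.filter (fun d => ∃ d' ∈ D, d' ≠ d ∧ (d * d'⁻¹ = w₀ ∨ d' * d⁻¹ = w₀))) := by
          intro d hd
          obtain ⟨hdD, hdn⟩ := Finset.mem_sdiff.mp hd
          rw [hD'def, Finset.mem_filter] at hdn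
          push_neg at hdn
          simp only [Finset.mem_union, Finset.mem_filter]
          by_cases c1 : f * (e₁ * d) ∈ F₁
          · exact Or.inl (Or.inl ⟨hdD, c1⟩)
          by_cases c2 : b * (e₂⁻¹ * d) ∈ F₁
          · exact Or.inl (Or.inr ⟨hdD, c2⟩)
          obtain ⟨d', hd'D, hne, hcase⟩ := hdn hdD c1 c2
          refine Or.inr ⟨hdD, d', hd'D, hne, ?_⟩
          by_cases c3 : d * d'⁻¹ = w₀
          · exact Or.inl c3
          · exact Or.inr (by tauto)
        calc (D \ D').card ≤ _ := Finset.card_le_card hsubD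
          _ ≤ _ := Finset.card_union_le _ _
          _ ≤ 2 * k + 4 := by
              have := Finset.card_union_le (D.filter fun d => f * (e₁ * d) ∈ F₁)
                (D.filter fun d => b * (e₂⁻¹ * d) ∈ F₁)
              omega
      have hcard' : m - r ≤ D'.card := by
        have h1 := Finset.card_sdiff_of_subset hD'sub
        have h2 := Finset.card_le_card hD'sub
        omega
    -- the pairs
      have hkey : ∀ d : Γ, (a * b⁻¹)⁻¹ * (f * (e₁ * d)) = b * (e₂⁻¹ * d) := by
        intro d
        rw [← hafu, ← hue]
        group
      set m' := D'.card with hm'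
      set ψ : Fin m' → Γ := fun i => ((D'.equivFin.symm i : { y // y ∈ D' }) : Γ) with hψ
      have hψD' : ∀ i, ψ i ∈ D' := fun i => (D'.equivFin.symm i).2
      have hψinj : Function.Injective ψ := fun i1 i2 h =>
        D'.equivFin.symm.injective (Subtype.ext h)
      set uf : Fin m' → Γ := fun i => b * (e₂⁻¹ * ψ i) with hufdef
      set vf : Fin m' → Γ := fun i => f * (e₁ * ψ i) with hvfdef
      have hufinj : Function.Injective uf := fun i1 i2 h => hψinj (by
        simp only [hufdef] at h; simpa using h)
      have hvfinj : Function.Injective vf := fun i1 i2 h => hψinj (by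
        simp only [hvfdef] at h; simpa using h)
      have huvne : ∀ i i', uf i ≠ vf i' := by
        intro i i' hcon
        simp only [hufdef, hvfdef] at hcon
        have hstep : ψ i' = e₁⁻¹ * (f⁻¹ * (b * (e₂⁻¹ * ψ i))) := by
          rw [hcon]; group
        have hdd : ψ i' * (ψ i)⁻¹ = w₀ := by rw [hstep, hw₀]; group
        by_cases hdeq : ψ i' = ψ i
        · rw [hdeq] at hdd
          simp only [mul_inv_cancel] at hdd
          exact hw₀ne hdd.symm
        · have hcond := (Finset.mem_filter.mp (hψD' i')).2.2.2
          exact (hcond (ψ i) (hD'sub (hψD' i)) (fun h => hdeq h.symm)).1 hdd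
      have hinc : bad (a, b) ⊆ {x : Γ → Bool | ∀ i, x (uf i) = x (vf i)} := by
        intro x hx
        intro i
        obtain ⟨_, hx2⟩ := hx
        have hdD' := hψD' i
        obtain ⟨hdD, hcond⟩ := Finset.mem_filter.mp hdD'
        obtain ⟨hnot1, hnot2, _⟩ := hcond
        have hhmem : f * (e₁ * ψ i) ∈ F₂ \ F₁ :=
          Finset.mem_sdiff.mpr ⟨hF2 f hf _ (hU e₁ he₁ (ψ i) (hDE (ψ i) hdD)), hnot1⟩
        have hgh : (a * b⁻¹)⁻¹ * (f * (e₁ * ψ i)) ∈ F₂ \ F₁ := by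
          rw [hkey (ψ i)]
          exact Finset.mem_sdiff.mpr ⟨hF2 b hb _ (hU e₂⁻¹ (hEinv e₂ he₂) (ψ i) (hDE (ψ i) hdD)), hnot2⟩
        have hx3 := hx2 (f * (e₁ * ψ i)) hhmem hgh
        rw [hkey (ψ i)] at hx3
        exact hx3
      calc μ (bad (a, b)) ≤ μ {x : Γ → Bool | ∀ i, x (uf i) = x (vf i)} := measure_mono hinc
        _ ≤ 2⁻¹ ^ m' := pair_event_bound μ hB m' uf vf huvne hufinj hvfinj
        _ ≤ 2⁻¹ ^ (m - r) := pow_le_pow_of_le_one zero_le (by norm_num) hcard'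
  have hfin : ((F₂ ×ˢ F₁).card : ENNReal) * (2⁻¹ : ENNReal) ^ (m - r) ≤ 2⁻¹ ^ n := by
    set s := m - r - n with hs
    have hNle : (F₂ ×ˢ F₁).card ≤ 2 ^ s := by
      have h1 : (F₂ ×ˢ F₁).card = F₂.card * k := by rw [Finset.card_product]
      have h2 : K ≤ 2 ^ K := (Nat.lt_two_pow_self (n := K)).le
      have h3 : (4 * j + 1) ^ 2 ≤ 2 ^ j := sq_le_two_pow j (by omega)
      have h4 : (F₂ ×ˢ F₁).card ≤ K * (2 * m + 1) ^ 2 := by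
        rw [h1, hK]
        calc F₂.card * k ≤ (k * (2 * m + 1) ^ 2) * k := Nat.mul_le_mul_right _ hF2card
          _ = k ^ 2 * (2 * m + 1) ^ 2 := by ring
      have h5 : 2 * m + 1 = 4 * j + 1 := by omega
      calc (F₂ ×ˢ F₁).card ≤ K * (2 * m + 1) ^ 2 := h4
        _ ≤ 2 ^ K * 2 ^ j := by rw [h5]; exact Nat.mul_le_mul h2 h3
        _ = 2 ^ (K + j) := (pow_add 2 _ _).symm
        _ ≤ 2 ^ s := Nat.pow_le_pow_right (by norm_num) (by omega)
    have hmr : m - r = s + n := by omega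
    calc ((F₂ ×ˢ F₁).card : ENNReal) * (2⁻¹ : ENNReal) ^ (m - r)
        ≤ ((2 ^ s : ℕ) : ENNReal) * 2⁻¹ ^ (m - r) := mul_le_mul_left (Nat.cast_le.mpr hNle) _
      _ = (2 : ENNReal) ^ s * (2⁻¹ ^ s * 2⁻¹ ^ n) := by rw [hmr, pow_add]; push_cast; ring
      _ = 2⁻¹ ^ n := by
          rw [← mul_assoc, ← ENNReal.inv_pow, ENNReal.mul_inv_cancel (by positivity) (by simp),
            one_mul]
  calc μ {x : Γ → Bool | SelfOverlapping x F₁ F₂} ≤ ∑ p ∈ F₂ ×ˢ F₁, μ (bad p) :=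
        (measure_mono hcover).trans (measure_biUnion_finset_le _ _)
    _ ≤ (F₂ ×ˢ F₁).card • (2⁻¹ : ENNReal) ^ (m - r) := Finset.sum_le_card_nsmul _ _ _ hpair
    _ = ((F₂ ×ˢ F₁).card : ENNReal) * 2⁻¹ ^ (m - r) := nsmul_eq_mul _ _
    _ ≤ 2⁻¹ ^ n := hfin


end AuxNSO

/-- **Almost every configuration is non self-overlapping (Lemma 4.5).**
Let `Γ` be a countably infinite group and `μ` the uniform Bernoulli measure on `{0,1}^Γ`
(characterized by giving each cylinder on a finite set `F` measure `2^{-|F|}`). Then there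
is a Borel set `X₀ ⊆ {0,1}^Γ` of full measure all of whose elements are non
self-overlapping. -/
theorem bernoulli_ae_nonSelfOverlapping
    {Γ : Type} [Group Γ] [Countable Γ] [Infinite Γ] [DecidableEq Γ]
    (μ : MeasureTheory.Measure (Γ → Bool)) (hprob : MeasureTheory.IsProbabilityMeasure μ)
    (hBernoulli : ∀ (F : Finset Γ) (x : Γ → Bool),
      μ {y : Γ → Bool | ∀ g ∈ F, y g = x g} = (2 : ENNReal)⁻¹ ^ F.card) :
    ∃ X₀ : Set (Γ → Bool), MeasurableSet X₀ ∧ μ X₀ = 1 ∧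
      ∀ x ∈ X₀, NonSelfOverlapping x := by
  classical
  haveI := hprob
  have hmeasSO : ∀ F₁ F₂ : Finset Γ, MeasurableSet {x : Γ → Bool | SelfOverlapping x F₁ F₂} := by
    intro F₁ F₂
    have hrw : {x : Γ → Bool | SelfOverlapping x F₁ F₂} =
        ⋃ (g : Γ), ⋃ (_ : (∃ a ∈ F₂, ∃ b ∈ F₁, g = a * b⁻¹) ∧ g ≠ 1),
          ⋂ (h : Γ), ⋂ (_ : h ∈ F₂ \ F₁ ∧ g⁻¹ * h ∈ F₂ \ F₁),
            {x : Γ → Bool | x (g⁻¹ * h) = x h} := by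
      ext x
      simp only [Set.mem_setOf_eq, Set.mem_iUnion, Set.mem_iInter]
      constructor
      · rintro ⟨g, hgex, hg1, hfit⟩
        exact ⟨g, ⟨hgex, hg1⟩, fun h hh => hfit h hh.1 hh.2⟩
      · rintro ⟨g, ⟨hgex, hg1⟩, hfit⟩
        exact ⟨g, hgex, hg1, fun h h1 h2 => hfit h ⟨h1, h2⟩⟩
    rw [hrw]
    refine MeasurableSet.iUnion fun g => MeasurableSet.iUnion fun _ =>
      MeasurableSet.iInter fun h => MeasurableSet.iInter fun _ => ?_
    exact measurableSet_eq_fun (measurable_pi_apply _) (measurable_pi_apply _)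
  set Bad : Finset Γ → Set (Γ → Bool) := fun F₁ =>
    ⋂ (F₂ : Finset Γ), ⋂ (_ : F₁ ⊆ F₂), {x : Γ → Bool | SelfOverlapping x F₁ F₂} with hBad
  have hBadmeas : ∀ F₁, MeasurableSet (Bad F₁) := fun F₁ =>
    MeasurableSet.iInter fun F₂ => MeasurableSet.iInter fun _ => hmeasSO F₁ F₂
  have hBadnull : ∀ F₁, μ (Bad F₁) = 0 := by
    intro F₁
    have hle : ∀ n : ℕ, μ (Bad F₁) ≤ 2⁻¹ ^ n := by
      intro n
      obtain ⟨F₂, hsub, hbound⟩ := key_bound μ hBernoulli F₁ n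
      refine le_trans (measure_mono ?_) hbound
      exact fun x hx => Set.mem_iInter.mp (Set.mem_iInter.mp hx F₂) hsub
    have h0 : μ (Bad F₁) ≤ 0 :=
      ge_of_tendsto' (ENNReal.tendsto_pow_atTop_nhds_zero_of_lt_one (by norm_num)) hle
    exact le_antisymm h0 zero_le
  refine ⟨(⋃ F₁ : Finset Γ, Bad F₁)ᶜ, (MeasurableSet.iUnion hBadmeas).compl, ?_, ?_⟩
  · rw [measure_compl (MeasurableSet.iUnion hBadmeas) (measure_ne_top μ _),
      measure_iUnion_null fun F₁ => hBadnull F₁]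
    simp
  · intro x hx F₁
    have hx1 : x ∉ Bad F₁ := fun h => hx (Set.mem_iUnion.mpr ⟨F₁, h⟩)
    by_contra hcon
    push_neg at hcon
    exact hx1 (Set.mem_iInter.mpr fun F₂ => Set.mem_iInter.mpr fun hsub => hcon F₂ hsub)
end
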